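/- arXiv:2508.07943 — 6 statements merged into one kernel-verified Lean document; each statement's English description precedes it below -/
import Mathlib

section
/- Let n ≥ 3 and 3 ≤ k ≤ n. Consider n random lengths X_1, …, X_n drawn independently and uniformly from [0,1] (equivalently, Lebesgue measure on the cube [0,1]^n), and let X_(1) ≤ X_(2) ≤ ⋯ ≤ X_(n) denote their increasing rearrangement. Then the probability of the event that X_(i) + X_(i+1) + ⋯ + X_(i+k−2) < X_(i+k−1) for every index 1 ≤ i ≤ n−k+1 (i.e., that no k-gon can be formed from any k of the sticks) equals 1 / ( (∏_{ℓ=1}^{k−1} T_{k,ℓ}(n)) · (∏_{i=1}^{n−k+1} T_{k,k−1}(n−i)) ). -/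
/-!
Sorting splits the cube into `n!` chambers of equal volume, so the probability is `n!` times the
volume of the set of increasing `y ∈ [0,1]^n` with no `k`-gon. In the slack coordinates `z` —
`y₀`, the gaps `yⱼ - yⱼ₋₁` for `0 < j < k - 1`, and the polygon slacks
`yⱼ - (yⱼ₋ₖ₊₁ + ⋯ + yⱼ₋₁)` for `j ≥ k - 1` — this set becomes, up to its null boundary, the
simplex `{z ≥ 0, ∑ cⱼ zⱼ ≤ 1}`; the change of variables is unitriangular. Here `cⱼ` is the
coefficient of `zⱼ` in `yₙ₋₁`, and solving the triangular system shows that these coefficients are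
the numbers `T k ℓ n` and `T k (k - 1) (n - i)`. The simplex has volume `1 / (n! ∏ cⱼ)`, whence the
answer `1 / ∏ cⱼ`. That the standard simplex has volume `1 / n!` is itself the case `k = 2`, where
the no-polygon condition only says that the sorted sticks are distinct.
-/

open MeasureTheory Finset ENNReal

/-- `T k ℓ` : the `(k-1)`-bonacci sequence with initial terms
`T k ℓ 1 = ⋯ = T k ℓ (ℓ-1) = 0`, `T k ℓ ℓ = ⋯ = T k ℓ (k-1) = 1` and
recurrence `T k ℓ m = ∑_{p=1}^{k-1} T k ℓ (m-p)` for `m ≥ k`. -/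
def T (k ℓ : ℕ) : ℕ → ℕ
  | m =>
    if m < k then (if ℓ ≤ m then 1 else 0)
    else if h0 : m = 0 then 0
    else ∑ p ∈ (Finset.range (k - 1)).attach, T k ℓ (m - (↑p + 1))
  termination_by m => m
  decreasing_by omega

/-- `S k` : the `(k-1)`-bonacci sequence with `S k 1 = 1`, `S k i = 2^(i-2)` for
`2 ≤ i ≤ k-1`, and recurrence `S k m = ∑_{p=1}^{k-1} S k (m-p)` for `m ≥ k`. -/
def S (k : ℕ) : ℕ → ℕ
  | m =>
    if h0 : m = 0 then 0
    else if m = 1 then 1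
    else if m < k then 2 ^ (m - 2)
    else ∑ p ∈ (Finset.range (k - 1)).attach, S k (m - (↑p + 1))
  termination_by m => m
  decreasing_by omega

/-- No `k`-gon can be formed from the (increasingly sorted) stick lengths `y`:
for every window of `k` consecutive entries, i.e. every (0-indexed) `i` with
`i + (k-1) < n`, one has `y i + ⋯ + y (i+k-2) < y (i+k-1)`. -/
def NoPolygon (n k : ℕ) (y : Fin n → ℝ) : Prop :=
  ∀ i : ℕ, ∀ hi : i + (k - 1) < n,
    (∑ j : Fin (k - 1), y ⟨i + j, by have := j.isLt; omega⟩) < y ⟨i + (k - 1), hi⟩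

open scoped Nat

namespace PickupSticks

section Sorting

variable {n : ℕ}

lemma volume_comp_perm (σ : Equiv.Perm (Fin n)) (C : Set (Fin n → ℝ)) :
    volume {x : Fin n → ℝ | x ∘ σ ∈ C} = volume C := by
  have hpres := volume_measurePreserving_piCongrLeft (fun _ : Fin n => ℝ) σ.symm
  convert hpres.measure_preimage_equiv C
  ext x
  simp only [Set.mem_ofPred_eq, Set.mem_preimage]
  congr!
  ext i
  simpa using
    (MeasurableEquiv.piCongrLeft_apply_apply σ.symm (β := fun _ : Fin n => ℝ) x (σ i)).symm

lemma eq_sort_of_strictMono_comp {x : Fin n → ℝ} {σ : Equiv.Perm (Fin n)}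
    (h : StrictMono (x ∘ σ)) : σ = Tuple.sort x :=
  Tuple.eq_sort_iff.mpr ⟨h.monotone, fun _ _ hij heq => absurd (h.injective heq) hij.ne⟩

lemma tsum_perm_const (c : ℝ≥0∞) : ∑' _ : Equiv.Perm (Fin n), c = n ! * c := by
  rw [tsum_fintype, Finset.sum_const, Finset.card_univ, Fintype.card_perm, Fintype.card_fin,
    nsmul_eq_mul]

-- A strictly increasing `x ∘ σ` forces `σ = Tuple.sort x`, so the `n!` copies of `L` are disjoint.
lemma volume_eq_factorial_mul_of_sort_mem {A L H : Set (Fin n → ℝ)} (hL : MeasurableSet L)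
    (hLH : volume L = volume H) (hL_mono : ∀ y ∈ L, StrictMono y)
    (hAH : ∀ x ∈ A, x ∘ Tuple.sort x ∈ H) (hLA : ∀ x, x ∘ Tuple.sort x ∈ L → x ∈ A) :
    volume A = n ! * volume H := by
  apply le_antisymm
  · calc volume A ≤ volume (⋃ σ : Equiv.Perm (Fin n), {x : Fin n → ℝ | x ∘ σ ∈ H}) :=
          measure_mono fun x hx => Set.mem_iUnion.mpr ⟨_, hAH x hx⟩
      _ ≤ ∑' σ : Equiv.Perm (Fin n), volume {x : Fin n → ℝ | x ∘ σ ∈ H} := measure_iUnion_le _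
      _ = n ! * volume H := by simp only [volume_comp_perm, tsum_perm_const]
  · have hsort {x : Fin n → ℝ} {σ : Equiv.Perm (Fin n)} (hx : x ∘ σ ∈ L) : σ = Tuple.sort x :=
      eq_sort_of_strictMono_comp (hL_mono _ hx)
    have hdisj : Pairwise (Function.onFun Disjoint
        fun σ : Equiv.Perm (Fin n) => {x : Fin n → ℝ | x ∘ σ ∈ L}) :=
      fun σ τ hne => Set.disjoint_left.mpr fun x hσ hτ => hne ((hsort hσ).trans (hsort hτ).symm)
    have hmeas (σ : Equiv.Perm (Fin n)) : MeasurableSet {x : Fin n → ℝ | x ∘ σ ∈ L} :=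
      hL.preimage (measurable_pi_lambda _ fun i => measurable_pi_apply (σ i))
    calc n ! * volume H = ∑' σ : Equiv.Perm (Fin n), volume {x : Fin n → ℝ | x ∘ σ ∈ L} := by
          simp only [volume_comp_perm, tsum_perm_const, hLH]
      _ = volume (⋃ σ : Equiv.Perm (Fin n), {x : Fin n → ℝ | x ∘ σ ∈ L}) :=
          (measure_iUnion hdisj hmeas).symm
      _ ≤ volume A := measure_mono (Set.iUnion_subset fun σ x hx => hLA x (hsort hx ▸ hx))

end Sorting

section Simplex

variable {n : ℕ}

def simplex (c : Fin n → ℝ) : Set (Fin n → ℝ) := {z | (∀ j, 0 ≤ z j) ∧ ∑ j, c j * z j ≤ 1}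

def openSimplex (c : Fin n → ℝ) : Set (Fin n → ℝ) := {z | (∀ j, 0 < z j) ∧ ∑ j, c j * z j ≤ 1}

lemma measurableSet_openSimplex (c : Fin n → ℝ) : MeasurableSet (openSimplex c) := by
  unfold openSimplex
  measurability

lemma volume_openSimplex (c : Fin n → ℝ) : volume (openSimplex c) = volume (simplex c) := by
  refine measure_congr (Filter.eventuallyEq_set.mpr ?_)
  have hae : ∀ᵐ z : Fin n → ℝ, ∀ j, z j ≠ 0 :=
    ae_all_iff.mpr fun j => Measure.ae_eval_ne (μ := fun _ => volume) j 0
  filter_upwards [hae] with z hz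
  simp only [openSimplex, simplex, Set.mem_ofPred_eq, lt_iff_le_and_ne, ne_comm (a := (0 : ℝ))]
  simp [hz]

lemma volume_simplex {c : Fin n → ℝ} (hc : ∀ j, 0 < c j) :
    volume (simplex c) = ENNReal.ofReal (∏ j, c j)⁻¹ * volume (simplex (1 : Fin n → ℝ)) := by
  have hprod : 0 < ∏ j, c j := Finset.prod_pos fun j _ => hc j
  have hdet : LinearMap.det (Matrix.toLin' (Matrix.diagonal c)) = ∏ j, c j := by
    rw [LinearMap.det_toLin', Matrix.det_diagonal]
  have hpre : simplex c = Matrix.toLin' (Matrix.diagonal c) ⁻¹' simplex 1 := by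
    ext z
    simp [simplex, Matrix.mulVec_diagonal, mul_nonneg_iff_of_pos_left (hc _)]
  rw [hpre, Measure.addHaar_preimage_linearMap _ (hdet ▸ hprod.ne'), hdet,
    abs_of_pos (inv_pos.mpr hprod)]

end Simplex

section Bonacci

variable {k ℓ m : ℕ}

lemma T_of_lt (h : m < k) : T k ℓ m = if ℓ ≤ m then 1 else 0 := by
  rw [T, if_pos h]

lemma T_eq_sum_of_le (hk : 0 < k) (h : k ≤ m) :
    T k ℓ m = ∑ p ∈ range (k - 1), T k ℓ (m - (p + 1)) := by
  rw [T, if_neg (by omega), dif_neg (by omega)]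
  exact sum_attach _ fun p => T k ℓ (m - (p + 1))

lemma T_pos (hk : 2 ≤ k) (hℓ : ℓ < k) (h : ℓ ≤ m) : 0 < T k ℓ m := by
  induction m using Nat.strong_induction_on with
  | _ m ih =>
    rcases lt_or_ge m k with hm | hm
    · simp [T_of_lt hm, h]
    · rw [T_eq_sum_of_le (by omega) hm]
      exact lt_of_lt_of_le (ih (m - 1) (by omega) (by omega))
        (single_le_sum (f := fun p => T k ℓ (m - (p + 1))) (fun _ _ => Nat.zero_le _)
          (mem_range.mpr (by omega : 0 < k - 1)))

lemma T_two_one (hm : 1 ≤ m) : T 2 1 m = 1 := by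
  induction m using Nat.strong_induction_on with
  | _ m ih =>
    rcases lt_or_ge m 2 with hm2 | hm2
    · simp [T_of_lt hm2, hm]
    · simpa [T_eq_sum_of_le two_pos hm2] using ih (m - 1) (by omega) (by omega)

end Bonacci

section Slack

def slackDepth (k j : ℕ) : ℕ := if j < k - 1 then min j 1 else k - 1

lemma slackDepth_le (k j : ℕ) : slackDepth k j ≤ j := by
  unfold slackDepth; split <;> omega

def slack (n k : ℕ) : (Fin n → ℝ) →ₗ[ℝ] (Fin n → ℝ) where
  toFun y j := y j - ∑ p ∈ Icc 1 (slackDepth k j), y ⟨j - p, by omega⟩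
  map_add' y z := by
    funext j
    simp only [Pi.add_apply, sum_add_distrib]
    ring
  map_smul' c y := by
    funext j
    simp only [Pi.smul_apply, RingHom.id_apply, smul_eq_mul, ← mul_sum]
    ring

-- The coefficient of the `j`-th slack in `y m`, i.e. entry `(m, j)` of the inverse of `slack n k`.
def slackCoeff (k m j : ℕ) : ℕ :=
  if j < k - 1 then T k (j + 1) (m + 1) else T k (k - 1) (m + 1 - (j - (k - 2)))

variable {n k : ℕ}

lemma slackCoeff_rec (hk : 2 ≤ k) (m j : ℕ) :
    slackCoeff k m j =
      (if j = m then 1 else 0) + ∑ p ∈ Icc 1 (slackDepth k m), slackCoeff k (m - p) j := by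
  rcases lt_or_ge m (k - 1) with hm | hm
  · have hd : slackDepth k m = min m 1 := if_pos hm
    rcases Nat.eq_zero_or_pos m with rfl | hm0
    · unfold slackCoeff
      split_ifs <;> simp (disch := omega) [T_of_lt] <;> omega
    · rw [hd, show min m 1 = 1 by omega, Icc_self, sum_singleton]
      unfold slackCoeff
      split_ifs <;> simp (disch := omega) [T_of_lt] <;> (try split_ifs) <;> omega
  · have hd : slackDepth k m = k - 1 := if_neg (by omega)
    rw [hd, ← Finset.Ico_add_one_right_eq_Icc, sum_Ico_eq_sum_range, Nat.add_sub_cancel]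
    unfold slackCoeff
    have hterm (p : ℕ) (hp : p ∈ range (k - 1)) : m - (1 + p) + 1 = m + 1 - (p + 1) := by
      rw [mem_range] at hp; omega
    by_cases hj : j < k - 1
    · simp only [hj, if_true, if_neg (show j ≠ m by omega), zero_add,
        T_eq_sum_of_le (by omega : 0 < k) (by omega : k ≤ m + 1)]
      exact sum_congr rfl fun p hp => by rw [hterm p hp]
    · simp only [hj, if_false]
      rcases lt_or_ge (m + 1 - (j - (k - 2))) k with h | h
      · rw [T_of_lt h, sum_eq_zero fun p hp => ?_, add_zero]
        · split_ifs <;> omega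
        · rw [mem_range] at hp
          rw [T_of_lt (by omega), if_neg (by omega)]
      · rw [if_neg (by omega), zero_add, T_eq_sum_of_le (by omega) h]
        exact sum_congr rfl fun p hp => by rw [hterm p hp]; congr 1; omega

lemma slackCoeff_pos {j : ℕ} (hk : 2 ≤ k) (hkn : k ≤ n) (hj : j < n) :
    0 < slackCoeff k (n - 1) j := by
  unfold slackCoeff
  split_ifs <;> exact T_pos hk (by omega) (by omega)

lemma prod_slackCoeff (hk : 2 ≤ k) (hkn : k ≤ n) :
    ∏ j : Fin n, slackCoeff k (n - 1) j =
      (∏ ℓ ∈ Icc 1 (k - 1), T k ℓ n) * ∏ i ∈ Icc 1 (n - k + 1), T k (k - 1) (n - i) := by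
  rw [Fin.prod_univ_eq_prod_range (slackCoeff k (n - 1)), range_eq_Ico,
    ← prod_Ico_consecutive _ (Nat.zero_le (k - 1)) (by omega : k - 1 ≤ n)]
  simp only [← Finset.Ico_add_one_right_eq_Icc, prod_Ico_eq_prod_range, Nat.add_sub_cancel]
  congr 1
  · refine prod_congr rfl fun j hj => ?_
    rw [mem_range] at hj
    simp only [slackCoeff, if_pos (by omega : 0 + j < k - 1)]
    congr 1 <;> omega
  · refine prod_congr (by congr 1; omega) fun i hi => ?_
    rw [mem_range] at hi
    simp only [slackCoeff, if_neg (by omega : ¬ k - 1 + i < k - 1)]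
    congr 1; omega

lemma slack_apply (y : Fin n → ℝ) (j : Fin n) :
    slack n k y j = y j - ∑ p ∈ Icc 1 (slackDepth k j), y ⟨j - p, by omega⟩ := rfl

lemma det_slack : LinearMap.det (slack n k) = 1 := by
  have hentry (i j : Fin n) (hij : i ≤ j) :
      LinearMap.toMatrix' (slack n k) i j = if i = j then 1 else 0 := by
    rw [LinearMap.toMatrix'_apply, slack_apply, sum_eq_zero fun p hp => ?_, sub_zero]
    · simp [Pi.single_apply]
    · have := slackDepth_le k i
      rw [mem_Icc] at hp
      rw [Pi.single_apply, if_neg (by rw [Fin.ext_iff]; simp only; omega)]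
  rw [← LinearMap.det_toMatrix',
    Matrix.det_of_isLowerTriangular _ fun i j (hij : i < j) => by
      rw [hentry i j hij.le, if_neg hij.ne]]
  exact prod_eq_one fun i _ => by rw [hentry i i le_rfl, if_pos rfl]

lemma eq_sum_slackCoeff_mul_slack (hk : 2 ≤ k) (y : Fin n → ℝ) (m : ℕ) (hm : m < n) :
    y ⟨m, hm⟩ = ∑ j : Fin n, (slackCoeff k m j : ℝ) * slack n k y j := by
  induction m using Nat.strong_induction_on with
  | _ m ih =>
    have hy : y ⟨m, hm⟩ = slack n k y ⟨m, hm⟩ +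
        ∑ p ∈ Icc 1 (slackDepth k m), y ⟨m - p, by omega⟩ := by
      rw [slack_apply]; ring
    have ih' : ∀ p ∈ Icc 1 (slackDepth k m), y ⟨m - p, by omega⟩ =
        ∑ j : Fin n, (slackCoeff k (m - p) j : ℝ) * slack n k y j := fun p hp => by
      have := slackDepth_le k m
      rw [mem_Icc] at hp
      exact ih (m - p) (by omega) _
    rw [hy, sum_congr rfl ih', sum_comm]
    simp only [slackCoeff_rec hk m, Nat.cast_add, Nat.cast_sum, Nat.cast_ite, Nat.cast_one,
      Nat.cast_zero, add_mul, sum_add_distrib, ite_mul, one_mul, zero_mul, sum_mul]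
    congr 1
    rw [Fintype.sum_eq_single ⟨m, hm⟩ fun j hj => if_neg fun h => hj (Fin.ext h), if_pos rfl]

lemma slack_window (y : Fin n → ℝ) (i : ℕ) (hi : i + (k - 1) < n) :
    slack n k y ⟨i + (k - 1), hi⟩ =
      y ⟨i + (k - 1), hi⟩ - ∑ t : Fin (k - 1), y ⟨i + t, by omega⟩ := by
  have hd : slackDepth k (i + (k - 1)) = k - 1 := if_neg (by omega)
  rw [slack_apply]
  simp only [hd]
  congr 1
  refine sum_bij' (fun p hp => ⟨k - 1 - p, by rw [mem_Icc] at hp; omega⟩)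
    (fun t _ => k - 1 - t) (fun _ _ => mem_univ _) (fun t _ => by rw [mem_Icc]; omega)
    (fun p hp => by rw [mem_Icc] at hp; simp only; omega) (fun t _ => by ext; simp only; omega)
    (fun p hp => by rw [mem_Icc] at hp; congr 2; simp only; omega)

lemma pos_and_strictMono_of_slack_pos (hk : 2 ≤ k) {y : Fin n → ℝ}
    (h : ∀ j, 0 < slack n k y j) :
    (∀ i, 0 < y i) ∧ StrictMono y := by
  have hpos : ∀ m (hm : m < n), 0 < y ⟨m, hm⟩ := by
    intro m
    induction m using Nat.strong_induction_on with
    | _ m ih =>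
      intro hm
      have hz := h ⟨m, hm⟩
      rw [slack_apply] at hz
      have := slackDepth_le k m
      have : 0 ≤ ∑ p ∈ Icc 1 (slackDepth k m), y ⟨m - p, by omega⟩ :=
        sum_nonneg fun p hp => (ih _ (by rw [mem_Icc] at hp; omega) _).le
      linarith
  refine ⟨fun i => hpos i i.isLt, ?_⟩
  rcases n with _ | n
  · exact fun i => i.elim0
  refine Fin.strictMono_iff_lt_succ.mpr fun i => ?_
  have hz := h i.succ
  have hd : 1 ≤ slackDepth k (i + 1) := by unfold slackDepth; split_ifs <;> omega
  have hle : y i.castSucc ≤ ∑ p ∈ Icc 1 (slackDepth k (i + 1)), y ⟨i + 1 - p, by omega⟩ :=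
    single_le_sum (f := fun p => y ⟨i + 1 - p, by omega⟩)
      (fun p _ => (hpos _ _).le) (mem_Icc.mpr ⟨le_rfl, hd⟩)
  rw [slack_apply] at hz
  exact lt_of_le_of_lt hle (by simpa using hz)

end Slack

section Regions

def slackWeight (n k : ℕ) (j : Fin n) : ℝ := slackCoeff k (n - 1) j

variable {n k : ℕ}

lemma slackWeight_pos (hk : 2 ≤ k) (hkn : k ≤ n) (j : Fin n) : 0 < slackWeight n k j :=
  Nat.cast_pos.mpr (slackCoeff_pos hk hkn j.isLt)

lemma sum_slackWeight_mul_slack (hk : 2 ≤ k) (hkn : k ≤ n) (y : Fin n → ℝ) :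
    ∑ j, slackWeight n k j * slack n k y j = y ⟨n - 1, by omega⟩ :=
  (eq_sum_slackCoeff_mul_slack hk y (n - 1) _).symm

lemma slack_mem_simplex (hk : 2 ≤ k) (hkn : k ≤ n) {y : Fin n → ℝ} (hmono : Monotone y)
    (hy : ∀ i, y i ∈ Set.Icc (0 : ℝ) 1)
    (hwin : ∀ i (hi : i + (k - 1) < n),
      ∑ t : Fin (k - 1), y ⟨i + t, by omega⟩ ≤ y ⟨i + (k - 1), hi⟩) :
    slack n k y ∈ simplex (slackWeight n k) := by
  refine ⟨fun j => ?_, (sum_slackWeight_mul_slack hk hkn y).symm ▸ (hy _).2⟩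
  rcases lt_or_ge (j : ℕ) (k - 1) with hj | hj
  · have hd : slackDepth k j = min (j : ℕ) 1 := if_pos hj
    rw [slack_apply, sub_nonneg, hd]
    rcases Nat.eq_zero_or_pos (j : ℕ) with hj0 | hj0
    · simpa [hj0] using (hy j).1
    · rw [show min (j : ℕ) 1 = 1 by omega, Icc_self, sum_singleton]
      exact hmono (Fin.mk_le_mk.mpr (by omega))
  · have hj' : (⟨j - (k - 1) + (k - 1), by omega⟩ : Fin n) = j := Fin.ext (by simp only; omega)
    rw [← hj', slack_window, sub_nonneg]
    exact hwin _ _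

lemma mem_Icc_noPolygon_strictMono_of_slack_mem_openSimplex (hk : 2 ≤ k) (hkn : k ≤ n)
    {y : Fin n → ℝ} (h : slack n k y ∈ openSimplex (slackWeight n k)) :
    (∀ i, y i ∈ Set.Icc (0 : ℝ) 1) ∧ NoPolygon n k y ∧ StrictMono y := by
  obtain ⟨hpos, hmono⟩ := pos_and_strictMono_of_slack_pos hk h.1
  refine ⟨fun i => ⟨(hpos i).le, ?_⟩, fun i hi => ?_, hmono⟩
  · have h1 : y ⟨n - 1, by omega⟩ ≤ 1 := sum_slackWeight_mul_slack hk hkn y ▸ h.2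
    exact (hmono.monotone (Fin.mk_le_mk.mpr (by omega) : i ≤ ⟨n - 1, by omega⟩)).trans h1
  · have := h.1 ⟨i + (k - 1), hi⟩
    rw [slack_window] at this
    linarith

lemma volume_eq_of_slack_comp_sort_mem (hk : 2 ≤ k) (hkn : k ≤ n) {A : Set (Fin n → ℝ)}
    (hAH : ∀ x ∈ A, slack n k (x ∘ Tuple.sort x) ∈ simplex (slackWeight n k))
    (hLA : ∀ x, slack n k (x ∘ Tuple.sort x) ∈ openSimplex (slackWeight n k) → x ∈ A) :
    volume A =
      ENNReal.ofReal (∏ j, slackWeight n k j)⁻¹ * (n ! * volume (simplex (1 : Fin n → ℝ))) := by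
  have hvol (S : Set (Fin n → ℝ)) : volume (slack n k ⁻¹' S) = volume S := by
    rw [Measure.addHaar_preimage_linearMap _ (by rw [det_slack]; exact one_ne_zero), det_slack]
    simp
  rw [volume_eq_factorial_mul_of_sort_mem (L := slack n k ⁻¹' openSimplex (slackWeight n k))
      (H := slack n k ⁻¹' simplex (slackWeight n k))
      ((measurableSet_openSimplex _).preimage
        (slack n k).continuous_of_finiteDimensional.measurable)
      (by rw [hvol, hvol, volume_openSimplex])
      (fun y hy => (mem_Icc_noPolygon_strictMono_of_slack_mem_openSimplex hk hkn hy).2.2) hAH hLA,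
    hvol, volume_simplex (slackWeight_pos hk hkn), mul_left_comm]

lemma factorial_mul_volume_simplex_one (hn : 2 ≤ n) :
    n ! * volume (simplex (1 : Fin n → ℝ)) = 1 := by
  have hw : slackWeight n 2 = 1 := funext fun j => by
    simp only [slackWeight, slackCoeff, Pi.one_apply]
    split_ifs
    · rw [show (j : ℕ) + 1 = 1 by omega, T_two_one (by omega), Nat.cast_one]
    · rw [T_two_one (by omega), Nat.cast_one]
  have hcube : volume {x : Fin n → ℝ | ∀ i, x i ∈ Set.Icc (0 : ℝ) 1} = 1 := by
    rw [show {x : Fin n → ℝ | ∀ i, x i ∈ Set.Icc (0 : ℝ) 1} = Set.Icc 0 1 by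
      ext; simp [Pi.le_def, forall_and], Real.volume_Icc_pi]
    simp
  rw [volume_eq_of_slack_comp_sort_mem le_rfl hn ?upper ?lower, hw] at hcube
  · simpa using hcube
  case upper =>
    exact fun x hx => slack_mem_simplex le_rfl hn (Tuple.monotone_sort x)
      ((Tuple.sort x).forall_congr_right.mpr hx)
      fun i hi => by simpa using Tuple.monotone_sort x (Fin.mk_le_mk.mpr (by omega : i ≤ i + 1))
  case lower =>
    exact fun x hx => (Tuple.sort x).forall_congr_right.mp
      (mem_Icc_noPolygon_strictMono_of_slack_mem_openSimplex le_rfl hn hx).1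

lemma ofReal_inv_prod_slackWeight (hk : 2 ≤ k) (hkn : k ≤ n) :
    ENNReal.ofReal (∏ j, slackWeight n k j)⁻¹ =
      1 / ((∏ ℓ ∈ Icc 1 (k - 1), (T k ℓ n : ℝ≥0∞)) *
        ∏ i ∈ Icc 1 (n - k + 1), (T k (k - 1) (n - i) : ℝ≥0∞)) := by
  have hprod : ∏ j, slackWeight n k j =
      ((∏ ℓ ∈ Icc 1 (k - 1), T k ℓ n) * ∏ i ∈ Icc 1 (n - k + 1), T k (k - 1) (n - i) : ℕ) := by
    rw [← prod_slackCoeff hk hkn, Nat.cast_prod]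
    rfl
  have hpos : 0 < ∏ j, slackWeight n k j := prod_pos fun j _ => slackWeight_pos hk hkn j
  rw [ENNReal.ofReal_inv_of_pos hpos, hprod, ofReal_natCast, one_div]
  push_cast
  rfl

end Regions

end PickupSticks

open PickupSticks in
theorem pickup_sticks_no_kgon_prob_general (n k : ℕ) (hk : 3 ≤ k) (hkn : k ≤ n) :
    volume {x : Fin n → ℝ | (∀ i, x i ∈ Set.Icc (0 : ℝ) 1) ∧
        NoPolygon n k (x ∘ Tuple.sort x)} =
      1 / ((∏ ℓ ∈ Finset.Icc 1 (k - 1), (T k ℓ n : ℝ≥0∞)) *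
           ∏ i ∈ Finset.Icc 1 (n - k + 1), (T k (k - 1) (n - i) : ℝ≥0∞)) := by
  have hk2 : 2 ≤ k := by omega
  rw [volume_eq_of_slack_comp_sort_mem hk2 hkn ?upper ?lower,
    factorial_mul_volume_simplex_one (by omega), mul_one, ofReal_inv_prod_slackWeight hk2 hkn]
  case upper =>
    exact fun x hx => slack_mem_simplex hk2 hkn (Tuple.monotone_sort x)
      ((Tuple.sort x).forall_congr_right.mpr hx.1) fun i hi => (hx.2 i hi).le
  case lower =>
    intro x hx
    obtain ⟨hcube, hpoly, -⟩ := mem_Icc_noPolygon_strictMono_of_slack_mem_openSimplex hk2 hkn hx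
    exact ⟨(Tuple.sort x).forall_congr_right.mp hcube, hpoly⟩

/-- **Pick-up sticks, main theorem.** For `n ≥ 3` and `3 ≤ k ≤ n`, the probability
(w.r.t. Lebesgue measure on the cube `[0,1]^n`) that no `k`-gon can be formed from the
`n` sticks — i.e. that every window of `k` consecutive order statistics satisfies
`X_(i) + ⋯ + X_(i+k-2) < X_(i+k-1)` — equals
`1 / ((∏_{ℓ=1}^{k-1} T_{k,ℓ}(n)) · (∏_{i=1}^{n-k+1} T_{k,k-1}(n-i)))`. -/
theorem pickup_sticks_no_kgon_prob (n k : ℕ) (hn : 3 ≤ n) (hk : 3 ≤ k) (hkn : k ≤ n) :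
    volume {x : Fin n → ℝ | (∀ i, x i ∈ Set.Icc (0 : ℝ) 1) ∧
        NoPolygon n k (x ∘ Tuple.sort x)} =
      1 / ((∏ ℓ ∈ Finset.Icc 1 (k - 1), (T k ℓ n : ℝ≥0∞)) *
           ∏ i ∈ Finset.Icc 1 (n - k + 1), (T k (k - 1) (n - i) : ℝ≥0∞)) :=
  pickup_sticks_no_kgon_prob_general n k hk hkn
end

section
/- Let n ≥ 3 and 3 ≤ k ≤ n. Then the two denominators appearing in the main theorem coincide: (∏_{ℓ=1}^{k−1} T_{k,ℓ}(n)) · (∏_{i=1}^{n−k+1} T_{k,k−1}(n−i)) = (∏_{ℓ=1}^{k−3} T_{k,ℓ}(n)) · (∏_{i=1}^{n−k+3} S_k(i)). -/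
open MeasureTheory Finset ENNReal

lemma T_lt {k l m : ℕ} (h : m < k) : T k l m = if l ≤ m then 1 else 0 := by
  rw [T, if_pos h]

lemma T_rec {k l m : ℕ} (hk : 3 ≤ k) (h : k ≤ m) :
    T k l m = ∑ p ∈ Finset.range (k - 1), T k l (m - (p + 1)) := by
  rw [T, if_neg (by omega), dif_neg (by omega)]
  exact Finset.sum_attach (Finset.range (k - 1)) (fun p => T k l (m - (p + 1)))

lemma S_one {k : ℕ} : S k 1 = 1 := by rw [S]; norm_num

lemma S_lt {k m : ℕ} (h2 : 2 ≤ m) (h : m < k) : S k m = 2 ^ (m - 2) := by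
  rw [S, dif_neg (by omega), if_neg (by omega), if_pos h]

lemma S_rec {k m : ℕ} (hk : 3 ≤ k) (h : k ≤ m) :
    S k m = ∑ p ∈ Finset.range (k - 1), S k (m - (p + 1)) := by
  rw [S, dif_neg (by omega), if_neg (by omega), if_neg (by omega)]
  exact Finset.sum_attach (Finset.range (k - 1)) (fun p => S k (m - (p + 1)))

lemma T_k {k : ℕ} (hk : 3 ≤ k) : T k (k - 1) k = 1 := by
  rw [T_rec hk le_rfl]
  have h : ∀ p ∈ Finset.range (k - 1), T k (k - 1) (k - (p + 1))
      = if p = 0 then 1 else 0 := by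
    intro p hp
    simp only [Finset.mem_range] at hp
    rw [T_lt (by omega)]
    by_cases h0 : p = 0
    · rw [if_pos h0, if_pos (by omega)]
    · rw [if_neg h0, if_neg (by omega)]
  rw [Finset.sum_congr rfl h, Finset.sum_ite_eq' (Finset.range (k - 1)) 0 (fun _ => 1),
    if_pos (Finset.mem_range.mpr (by omega))]

lemma T_double {k m : ℕ} (hk : 3 ≤ k) (hm : k ≤ m) (hm2 : m ≤ 2 * k - 3) :
    T k (k - 1) (m + 1) = 2 * T k (k - 1) m := by
  have h1 : T k (k - 1) (m + 1) = ∑ p ∈ Finset.range (k - 1), T k (k - 1) (m - p) := by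
    rw [T_rec hk (by omega)]
    exact Finset.sum_congr rfl fun p hp => by
      simp only [Finset.mem_range] at hp; congr 1; omega
  have h2 : ∑ p ∈ Finset.range (k - 1), T k (k - 1) (m - p)
      = (∑ p ∈ Finset.range (k - 2), T k (k - 1) (m - (p + 1))) + T k (k - 1) m := by
    rw [show Finset.range (k - 1) = Finset.range ((k - 2) + 1) by congr 1 <;> omega,
      Finset.sum_range_succ' (fun p => T k (k - 1) (m - p)) (k - 2)]
    simp
  have h3 : T k (k - 1) m = ∑ p ∈ Finset.range (k - 2), T k (k - 1) (m - (p + 1)) := by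
    rw [T_rec hk hm,
      show Finset.range (k - 1) = Finset.range ((k - 2) + 1) by congr 1 <;> omega,
      Finset.sum_range_succ]
    have h0 : T k (k - 1) (m - (k - 2 + 1)) = 0 := by
      rw [T_lt (by omega), if_neg (by omega)]
    rw [h0, add_zero]
  rw [h1, h2, ← h3]; ring

lemma T_pow {k : ℕ} (hk : 3 ≤ k) : ∀ m, k ≤ m → m ≤ 2 * k - 2 →
    T k (k - 1) m = 2 ^ (m - k) := by
  intro m hm
  induction m, hm using Nat.le_induction with
  | base => intro _; simpa using T_k hk
  | succ m hm ih =>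
    intro h2
    rw [T_double hk hm (by omega), ih (by omega), show m + 1 - k = (m - k) + 1 by omega,
      pow_succ]
    ring

lemma S_eq_T {k : ℕ} (hk : 3 ≤ k) : ∀ i, 1 ≤ i → S k i = T k (k - 1) (k - 2 + i) := by
  intro i
  induction i using Nat.strong_induction_on with
  | _ i ih =>
    intro hi
    rcases lt_or_ge i k with hik | hik
    · rcases eq_or_lt_of_le hi with h1 | h2
      · rw [← h1, S_one, show k - 2 + 1 = k - 1 by omega, T_lt (by omega), if_pos le_rfl]
      · rw [S_lt (by omega) hik, T_pow hk _ (by omega) (by omega)]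
        congr 1; omega
    · rw [S_rec hk hik, T_rec hk (by omega)]
      refine Finset.sum_congr rfl fun p hp => ?_
      simp only [Finset.mem_range] at hp
      rw [ih (i - (p + 1)) (by omega) (by omega)]
      congr 1; omega

lemma T_shift {k : ℕ} (hk : 3 ≤ k) : ∀ m, T k (k - 2) m = T k (k - 1) (m + 1) := by
  intro m
  induction m using Nat.strong_induction_on with
  | _ m ih =>
    rcases lt_trichotomy m (k - 1) with h | h | h
    · rw [T_lt (by omega), T_lt (by omega)]
      by_cases hc : k - 2 ≤ m
      · rw [if_pos hc, if_pos (by omega)]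
      · rw [if_neg hc, if_neg (by omega)]
    · rw [T_lt (by omega), if_pos (by omega), show m + 1 = k by omega]
      exact (T_k hk).symm
    · rw [T_rec hk (by omega), T_rec hk (by omega)]
      refine Finset.sum_congr rfl fun p hp => ?_
      simp only [Finset.mem_range] at hp
      rw [ih (m - (p + 1)) (by omega)]
      congr 1; omega

/-- The two denominators of the main theorem coincide:
`(∏_{ℓ=1}^{k-1} T_{k,ℓ}(n)) · (∏_{i=1}^{n-k+1} T_{k,k-1}(n-i))
  = (∏_{ℓ=1}^{k-3} T_{k,ℓ}(n)) · (∏_{i=1}^{n-k+3} S_k(i))`. -/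
theorem denominators_coincide (n k : ℕ) (hn : 3 ≤ n) (hk : 3 ≤ k) (hkn : k ≤ n) :
    (∏ ℓ ∈ Finset.Icc 1 (k - 1), T k ℓ n) *
        (∏ i ∈ Finset.Icc 1 (n - k + 1), T k (k - 1) (n - i)) =
      (∏ ℓ ∈ Finset.Icc 1 (k - 3), T k ℓ n) *
        ∏ i ∈ Finset.Icc 1 (n - k + 3), S k i := by
  have e1 : (∏ ℓ ∈ Finset.Icc 1 (k - 1), T k ℓ n)
      = (∏ ℓ ∈ Finset.Icc 1 (k - 3), T k ℓ n) * (T k (k - 2) n * T k (k - 1) n) := by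
    rw [show Finset.Icc 1 (k - 1) = Finset.Icc 1 ((k - 2) + 1) by congr 1 <;> omega,
      Finset.prod_Icc_succ_top (by omega),
      show Finset.Icc 1 (k - 2) = Finset.Icc 1 ((k - 3) + 1) by congr 1 <;> omega,
      Finset.prod_Icc_succ_top (by omega),
      show k - 3 + 1 = k - 2 by omega, show k - 2 + 1 = k - 1 by omega]
    ring
  have e2 : (∏ i ∈ Finset.Icc 1 (n - k + 1), T k (k - 1) (n - i))
      = ∏ i ∈ Finset.Icc 1 (n - k + 1), S k i := by
    refine Finset.prod_nbij' (fun i => n - k + 2 - i) (fun j => n - k + 2 - j)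
      ?_ ?_ ?_ ?_ ?_ <;> intro a ha <;> simp only [Finset.mem_Icc] at * <;> try omega
    rw [S_eq_T hk _ (by omega)]
    congr 1; omega
  have e3 : T k (k - 2) n = S k (n - k + 3) := by
    rw [T_shift hk, S_eq_T hk _ (by omega)]
    congr 1; omega
  have e4 : T k (k - 1) n = S k (n - k + 2) := by
    rw [S_eq_T hk _ (by omega)]
    congr 1; omega
  have e5 : (∏ i ∈ Finset.Icc 1 (n - k + 3), S k i)
      = (∏ i ∈ Finset.Icc 1 (n - k + 1), S k i) * S k (n - k + 2) * S k (n - k + 3) := by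
    rw [show Finset.Icc 1 (n - k + 3) = Finset.Icc 1 ((n - k + 2) + 1) by congr 1 <;> omega,
      Finset.prod_Icc_succ_top (by omega),
      show Finset.Icc 1 (n - k + 2) = Finset.Icc 1 ((n - k + 1) + 1) by congr 1 <;> omega,
      Finset.prod_Icc_succ_top (by omega),
      show n - k + 1 + 1 = n - k + 2 by omega, show n - k + 2 + 1 = n - k + 3 by omega]
  rw [e1, e2, e3, e4, e5]
  ring
end

section
/- Let n ≥ 3, 3 ≤ k ≤ n, and let u ∈ ℝ^n. Define v_1 := u_1, v_i := u_i − u_{i−1} for 2 ≤ i ≤ k−1, and v_i := u_i − Σ_{j=i−k+1}^{i−1} u_j for k ≤ i ≤ n. Then: (a) for every 1 ≤ m ≤ k−1, u_m = Σ_{j=1}^{m} v_j = Σ_{ℓ=1}^{m} T_{k,ℓ}(m) v_ℓ; and (b) for every k ≤ m ≤ n, u_m = Σ_{ℓ=1}^{k−1} T_{k,ℓ}(m) v_ℓ + Σ_{i=1}^{m−k+1} T_{k,k−1}(m−i) v_{k−1+i}. -/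
open MeasureTheory Finset ENNReal

lemma Tsmall (k ℓ m : ℕ) (h : m < k) : T k ℓ m = if ℓ ≤ m then 1 else 0 := by
  rw [T]; simp [h]

lemma Trec (k ℓ m : ℕ) (h : k ≤ m) (hk : 1 ≤ k) :
    T k ℓ m = ∑ p ∈ Finset.range (k - 1), T k ℓ (m - (p + 1)) := by
  rw [T, if_neg (by omega), dif_neg (by omega)]
  exact Finset.sum_attach (Finset.range (k-1)) (fun p => T k ℓ (m - (p+1)))

lemma reidx {M : Type*} [AddCommMonoid M] (k m : ℕ) (hk : 1 ≤ k) (h : k ≤ m)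
    (f : ℕ → M) :
    ∑ p ∈ Finset.range (k - 1), f (m - (p + 1)) = ∑ j ∈ Finset.Icc (m - k + 1) (m - 1), f j := by
  apply Finset.sum_nbij' (i := fun p => m - (p + 1)) (j := fun j => m - 1 - j) <;>
    intros a ha <;> simp only [Finset.mem_range, Finset.mem_Icc] at ha ⊢ <;>
    first | omega | (congr 1; omega)

lemma small_lemma (k : ℕ) (hk : 3 ≤ k) (u v : ℕ → ℝ)
    (hv1 : v 1 = u 1)
    (hv2 : ∀ i, 2 ≤ i → i ≤ k - 1 → v i = u i - u (i - 1)) :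
    ∀ m, 1 ≤ m → m ≤ k - 1 → u m = ∑ j ∈ Finset.Icc 1 m, v j := by
  intro m
  induction m with
  | zero => omega
  | succ m ih =>
    intro h1 h2
    rcases Nat.eq_zero_or_pos m with hm | hm
    · subst hm; simp [hv1]
    · have h3 : v (m + 1) = u (m + 1) - u m := by
        have := hv2 (m + 1) (by omega) h2
        simpa using this
      rw [Finset.sum_Icc_succ_top (by omega : 1 ≤ m + 1), ← ih hm (by omega), h3]
      ring

lemma step_lemma (k m : ℕ) (hk : 3 ≤ k) (hm : k ≤ m) (v : ℕ → ℝ) :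
    (∑ ℓ ∈ Finset.Icc 1 (k - 1), (T k ℓ m : ℝ) * v ℓ) +
      (∑ i ∈ Finset.Icc 1 (m - k + 1), (T k (k - 1) (m - i) : ℝ) * v (k - 1 + i)) =
    v m + ∑ j ∈ Finset.Icc (m - k + 1) (m - 1),
      ((∑ ℓ ∈ Finset.Icc 1 (k - 1), (T k ℓ j : ℝ) * v ℓ) +
        ∑ i ∈ Finset.Icc 1 (j - k + 1), (T k (k - 1) (j - i) : ℝ) * v (k - 1 + i)) := by
  have hA : (∑ ℓ ∈ Finset.Icc 1 (k - 1), (T k ℓ m : ℝ) * v ℓ) =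
      ∑ j ∈ Finset.Icc (m - k + 1) (m - 1), ∑ ℓ ∈ Finset.Icc 1 (k - 1), (T k ℓ j : ℝ) * v ℓ := by
    rw [Finset.sum_comm]
    apply Finset.sum_congr rfl
    intro ℓ _
    rw [Trec k ℓ m hm (by omega)]
    push_cast
    rw [Finset.sum_mul]
    exact reidx k m (by omega) hm (fun j => (T k ℓ j : ℝ) * v ℓ)
  have h2 : ∀ i ∈ Finset.Icc 1 (m - k), (T k (k - 1) (m - i) : ℝ) =
      ∑ j ∈ Finset.Icc (m - k + 1) (m - 1), (T k (k - 1) (j - i) : ℝ) := by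
    intro i hi
    simp only [Finset.mem_Icc] at hi
    rw [Trec k (k - 1) (m - i) (by omega) (by omega)]
    push_cast
    rw [← reidx k m (by omega) hm (fun j => (T k (k - 1) (j - i) : ℝ))]
    apply Finset.sum_congr rfl
    intro p hp
    have : m - i - (p + 1) = m - (p + 1) - i := by omega
    rw [this]
  have h3 : ∀ j ∈ Finset.Icc (m - k + 1) (m - 1),
      (∑ i ∈ Finset.Icc 1 (m - k), (T k (k - 1) (j - i) : ℝ) * v (k - 1 + i)) =
      ∑ i ∈ Finset.Icc 1 (j - k + 1), (T k (k - 1) (j - i) : ℝ) * v (k - 1 + i) := by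
    intro j hj
    simp only [Finset.mem_Icc] at hj
    trans (∑ i ∈ Finset.Icc 1 (m - k + 1), (T k (k - 1) (j - i) : ℝ) * v (k - 1 + i))
    · apply Finset.sum_subset (Finset.Icc_subset_Icc_right (by omega))
      intro i hi hni
      simp only [Finset.mem_Icc] at hi hni
      rw [Tsmall k (k - 1) (j - i) (by omega), if_neg (by omega)]
      simp
    · refine (Finset.sum_subset (Finset.Icc_subset_Icc_right (by omega)) ?_).symm
      intro i hi hni
      simp only [Finset.mem_Icc] at hi hni
      rw [Tsmall k (k - 1) (j - i) (by omega), if_neg (by omega)]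
      simp
  have hB : (∑ i ∈ Finset.Icc 1 (m - k + 1), (T k (k - 1) (m - i) : ℝ) * v (k - 1 + i)) =
      v m + ∑ j ∈ Finset.Icc (m - k + 1) (m - 1),
        ∑ i ∈ Finset.Icc 1 (j - k + 1), (T k (k - 1) (j - i) : ℝ) * v (k - 1 + i) := by
    rw [Finset.sum_Icc_succ_top (by omega : 1 ≤ m - k + 1)]
    have e1 : m - (m - k + 1) = k - 1 := by omega
    have e2 : k - 1 + (m - k + 1) = m := by omega
    rw [e1, e2, Tsmall k (k - 1) (k - 1) (by omega), if_pos le_rfl, Nat.cast_one, one_mul]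
    have : (∑ i ∈ Finset.Icc 1 (m - k), (T k (k - 1) (m - i) : ℝ) * v (k - 1 + i)) =
        ∑ j ∈ Finset.Icc (m - k + 1) (m - 1),
          ∑ i ∈ Finset.Icc 1 (j - k + 1), (T k (k - 1) (j - i) : ℝ) * v (k - 1 + i) := by
      calc (∑ i ∈ Finset.Icc 1 (m - k), (T k (k - 1) (m - i) : ℝ) * v (k - 1 + i)) =
          ∑ i ∈ Finset.Icc 1 (m - k), ∑ j ∈ Finset.Icc (m - k + 1) (m - 1),
            (T k (k - 1) (j - i) : ℝ) * v (k - 1 + i) := by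
            apply Finset.sum_congr rfl
            intro i hi
            rw [h2 i hi, Finset.sum_mul]
        _ = ∑ j ∈ Finset.Icc (m - k + 1) (m - 1), ∑ i ∈ Finset.Icc 1 (m - k),
            (T k (k - 1) (j - i) : ℝ) * v (k - 1 + i) := Finset.sum_comm
        _ = _ := Finset.sum_congr rfl h3
    rw [this]
    ring
  rw [Finset.sum_add_distrib, hA, hB]
  ring

lemma aux_lemma (n k : ℕ) (hk : 3 ≤ k) (hkn : k ≤ n) (u v : ℕ → ℝ)
    (hv1 : v 1 = u 1)
    (hv2 : ∀ i, 2 ≤ i → i ≤ k - 1 → v i = u i - u (i - 1))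
    (hv3 : ∀ i, k ≤ i → i ≤ n →
      v i = u i - ∑ j ∈ Finset.Icc (i - k + 1) (i - 1), u j) :
    ∀ m, 1 ≤ m → m ≤ n →
      u m = (∑ ℓ ∈ Finset.Icc 1 (k - 1), (T k ℓ m : ℝ) * v ℓ) +
        ∑ i ∈ Finset.Icc 1 (m - k + 1), (T k (k - 1) (m - i) : ℝ) * v (k - 1 + i) := by
  intro m
  induction m using Nat.strong_induction_on with
  | _ m IH =>
  intro hm1 hmn
  by_cases hmk : m < k
  · have hB : (∑ i ∈ Finset.Icc 1 (m - k + 1), (T k (k - 1) (m - i) : ℝ) * v (k - 1 + i)) = 0 := by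
      have e : m - k + 1 = 1 := by omega
      rw [e, Finset.Icc_self, Finset.sum_singleton,
        Tsmall k (k - 1) (m - 1) (by omega), if_neg (show ¬(k - 1 ≤ m - 1) by omega)]
      simp
    have hA : (∑ ℓ ∈ Finset.Icc 1 (k - 1), (T k ℓ m : ℝ) * v ℓ) = ∑ ℓ ∈ Finset.Icc 1 m, v ℓ := by
      rw [← Finset.sum_subset (Finset.Icc_subset_Icc_right (by omega : m ≤ k - 1))]
      · apply Finset.sum_congr rfl
        intro ℓ hℓ
        simp only [Finset.mem_Icc] at hℓ
        rw [Tsmall k ℓ m hmk, if_pos hℓ.2, Nat.cast_one, one_mul]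
      · intro ℓ hℓ hℓ'
        simp only [Finset.mem_Icc] at hℓ hℓ'
        rw [Tsmall k ℓ m hmk, if_neg (by omega)]
        simp
    rw [hA, hB, add_zero]
    exact small_lemma k hk u v hv1 hv2 m hm1 (by omega)
  · have hm : k ≤ m := by omega
    have hu : u m = v m + ∑ j ∈ Finset.Icc (m - k + 1) (m - 1), u j := by
      have := hv3 m hm hmn
      linarith
    rw [step_lemma k m hk hm v, hu]
    congr 1
    apply Finset.sum_congr rfl
    intro j hj
    simp only [Finset.mem_Icc] at hj
    exact IH j (by omega) (by omega) (by omega)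

/-- **The key lemma.** Given `u ∈ ℝ^n` (indexed `1,…,n`) and the change of variables
`v_1 = u_1`, `v_i = u_i - u_{i-1}` for `2 ≤ i ≤ k-1`,
`v_i = u_i - ∑_{j=i-k+1}^{i-1} u_j` for `k ≤ i ≤ n`, one has:
(a) `u_m = ∑_{j=1}^m v_j = ∑_{ℓ=1}^m T_{k,ℓ}(m) v_ℓ` for `1 ≤ m ≤ k-1`, and
(b) `u_m = ∑_{ℓ=1}^{k-1} T_{k,ℓ}(m) v_ℓ + ∑_{i=1}^{m-k+1} T_{k,k-1}(m-i) v_{k-1+i}`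
for `k ≤ m ≤ n`. -/
theorem key_lemma (n k : ℕ) (hn : 3 ≤ n) (hk : 3 ≤ k) (hkn : k ≤ n)
    (u v : ℕ → ℝ)
    (hv1 : v 1 = u 1)
    (hv2 : ∀ i, 2 ≤ i → i ≤ k - 1 → v i = u i - u (i - 1))
    (hv3 : ∀ i, k ≤ i → i ≤ n →
      v i = u i - ∑ j ∈ Finset.Icc (i - k + 1) (i - 1), u j) :
    (∀ m, 1 ≤ m → m ≤ k - 1 →
      u m = (∑ j ∈ Finset.Icc 1 m, v j) ∧
      u m = ∑ ℓ ∈ Finset.Icc 1 m, (T k ℓ m : ℝ) * v ℓ) ∧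
    (∀ m, k ≤ m → m ≤ n →
      u m = (∑ ℓ ∈ Finset.Icc 1 (k - 1), (T k ℓ m : ℝ) * v ℓ) +
        ∑ i ∈ Finset.Icc 1 (m - k + 1), (T k (k - 1) (m - i) : ℝ) * v (k - 1 + i)) := by
  constructor
  · intro m h1 h2
    have hs := small_lemma k hk u v hv1 hv2 m h1 h2
    refine ⟨hs, ?_⟩
    rw [hs]
    apply Finset.sum_congr rfl
    intro ℓ hℓ
    simp only [Finset.mem_Icc] at hℓ
    rw [Tsmall k ℓ m (by omega), if_pos hℓ.2, Nat.cast_one, one_mul]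
  · intro m h1 h2
    exact aux_lemma n k hk hkn u v hv1 hv2 hv3 m (by omega) h2
end

section
/- Let n ≥ 3 and 3 ≤ k ≤ n. Let E_{n,k} ⊆ ℝ^n be the set of points u = (u_1, …, u_n) satisfying 0 < u_1, u_{i−1} < u_i for all 2 ≤ i ≤ k−1, Σ_{j=i−k+1}^{i−1} u_j < u_i for all k ≤ i ≤ n, and u_n ≤ 1. Then the n-dimensional Lebesgue measure of E_{n,k} equals (1/n!) · (∏_{ℓ=1}^{k−1} 1/T_{k,ℓ}(n)) · (∏_{i=1}^{n−k+1} 1/T_{k,k−1}(n−i)). -/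
/-!
The slack variables `v_m = u_m - (sum of the window of coordinates preceding u_m)` are a
unimodular lower triangular change of coordinates, which maps `E_{n,k}` onto the weighted simplex
`{v > 0, ∑ c_ℓ v_ℓ ≤ 1}`, where `u_n = ∑ c_ℓ v_ℓ`. The weights `c_ℓ` form the last row of the
inverse matrix, whose columns obey the `(k-1)`-bonacci recurrence; comparing initial values gives
`c_ℓ = T_{k,ℓ+1}(n)` for `ℓ ≤ k - 2` and `c_ℓ = T_{k,k-1}(n + k - 2 - ℓ)` otherwise. The weighted
simplex has volume `1 / (n! ∏ c_ℓ)`.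
-/

open MeasureTheory Finset ENNReal

def posSimplex (n : ℕ) (t : ℝ) : Set (Fin n → ℝ) := {v | (∀ i, 0 < v i) ∧ ∑ i, v i ≤ t}

lemma measurableSet_posSimplex (n : ℕ) (t : ℝ) : MeasurableSet (posSimplex n t) :=
  measurableSet_setOfPred.2 (by fun_prop)

lemma posSimplex_eq_empty {n : ℕ} {t : ℝ} (ht : t < 0) : posSimplex n t = ∅ :=
  Set.eq_empty_of_forall_notMem fun _ ⟨hpos, hsum⟩ =>
    (sum_nonneg fun i _ => (hpos i).le).not_gt (hsum.trans_lt ht)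

lemma lintegral_Ioc_ofReal_sub_pow {t : ℝ} (ht : 0 ≤ t) (n : ℕ) :
    ∫⁻ x in Set.Ioc 0 t, ENNReal.ofReal (t - x) ^ n = ENNReal.ofReal t ^ (n + 1) / (n + 1) := by
  have hint : ∫ x in Set.Ioc 0 t, (t - x) ^ n = t ^ (n + 1) / (n + 1) := by
    rw [← intervalIntegral.integral_of_le ht,
      intervalIntegral.integral_comp_sub_left (fun x => x ^ n), integral_pow]
    simp
  rw [setLIntegral_congr_fun measurableSet_Ioc fun x hx =>
      (ENNReal.ofReal_pow (by linarith [hx.2]) n).symm,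
    ← ofReal_integral_eq_lintegral_ofReal, hint, ENNReal.ofReal_div_of_pos (by positivity),
    ENNReal.ofReal_pow ht]
  · norm_cast
  · exact (continuous_const.sub continuous_id).pow n |>.integrableOn_Icc.mono_set
      Set.Ioc_subset_Icc_self
  · exact (ae_restrict_iff' measurableSet_Ioc).2
      (.of_forall fun x hx => pow_nonneg (by linarith [hx.2]) n)

theorem volume_posSimplex (n : ℕ) {t : ℝ} (ht : 0 ≤ t) :
    volume (posSimplex n t) = ENNReal.ofReal t ^ n / n.factorial := by
  induction n generalizing t with
  | zero =>
    rw [show posSimplex 0 t = Set.univ by ext v; simp [posSimplex, ht],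
      Measure.volume_pi_eq_dirac]
    simp
  | succ n ih =>
    set A : Set (ℝ × (Fin n → ℝ)) := {p | 0 < p.1 ∧ (∀ i, 0 < p.2 i) ∧ ∑ i, p.2 i ≤ t - p.1}
    have hA : MeasurableSet A := measurableSet_setOfPred.2 (by fun_prop)
    have hpre : MeasurableEquiv.piFinSuccAbove (fun _ => ℝ) 0 ⁻¹' A = posSimplex (n + 1) t := by
      ext v
      simp [A, posSimplex, Fin.forall_fin_succ, Fin.sum_univ_succ, Fin.tail, and_assoc,
        le_sub_iff_add_le']
    have hslice : (fun x => volume (Prod.mk x ⁻¹' A)) =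
        (Set.Ioc 0 t).indicator fun x => ENNReal.ofReal (t - x) ^ n / n.factorial := by
      ext x
      rcases le_or_gt x 0 with hx0 | hx0
      · rw [Set.indicator_of_notMem fun hx => hx0.not_gt hx.1]
        simp [A, hx0.not_gt]
      have hAx : Prod.mk x ⁻¹' A = posSimplex n (t - x) := by ext y; simp [A, posSimplex, hx0]
      rw [hAx]
      rcases le_or_gt x t with hxt | hxt
      · rw [Set.indicator_of_mem (Set.mem_Ioc.2 ⟨hx0, hxt⟩), ih (sub_nonneg.2 hxt)]
      · rw [Set.indicator_of_notMem fun hx => hxt.not_ge hx.2, posSimplex_eq_empty (by linarith),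
          measure_empty]
    rw [← hpre,
      (volume_preserving_piFinSuccAbove (fun _ => ℝ) 0).measure_preimage hA.nullMeasurableSet,
      Measure.volume_eq_prod, Measure.prod_apply hA, hslice, lintegral_indicator measurableSet_Ioc]
    simp_rw [div_eq_mul_inv]
    rw [lintegral_mul_const' _ _ (by simp [Nat.factorial_ne_zero]), lintegral_Ioc_ofReal_sub_pow ht,
      Nat.factorial_succ, Nat.cast_mul, ENNReal.mul_inv (by simp) (by simp), div_eq_mul_inv,
      mul_assoc, Nat.cast_succ]

lemma ofReal_inv_prod_natCast {ι : Type*} (s : Finset ι) (a : ι → ℕ) (ha : ∀ i ∈ s, 0 < a i) :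
    ENNReal.ofReal (∏ i ∈ s, (a i : ℝ))⁻¹ = ∏ i ∈ s, ((a i : ℝ≥0∞))⁻¹ := by
  rw [← Nat.cast_prod, ENNReal.ofReal_inv_of_pos (by exact_mod_cast prod_pos ha),
    ENNReal.ofReal_natCast, Nat.cast_prod,
    ENNReal.prod_inv_distrib fun _ _ _ _ _ => .inr (ENNReal.natCast_ne_top _)]

section lowerWindow

open Matrix

variable {R : Type*} {n : ℕ}

def lowerWindow [Zero R] [One R] (n : ℕ) (s : ℕ → ℕ) : Matrix (Fin n) (Fin n) R :=
  Matrix.of fun i j => if s i ≤ j ∧ (j : ℕ) < i then 1 else 0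

lemma lowerWindow_mulVec [NonAssocSemiring R] (s : ℕ → ℕ) (f : ℕ → R) (i : Fin n) :
    (lowerWindow n s *ᵥ fun j => f j) i = ∑ j ∈ Ico (s i) i, f j := by
  simp only [Matrix.mulVec, dotProduct, lowerWindow, Matrix.of_apply, ite_mul, one_mul, zero_mul]
  rw [Fin.sum_univ_eq_sum_range (fun j => if s i ≤ j ∧ j < i then f j else 0), ← sum_filter]
  congr 1
  ext j
  simp only [mem_filter, mem_range, mem_Ico]
  omega

lemma det_one_sub_lowerWindow [CommRing R] (s : ℕ → ℕ) :
    (1 - lowerWindow n s : Matrix (Fin n) (Fin n) R).det = 1 := by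
  rw [Matrix.det_of_isLowerTriangular]
  · simp [lowerWindow]
  · intro i j hij
    have hij : (i : ℕ) < j := hij
    simp only [Matrix.sub_apply, Matrix.one_apply_ne (Fin.ne_of_val_ne hij.ne), lowerWindow,
      Matrix.of_apply]
    rw [if_neg (by omega), sub_zero]

end lowerWindow

namespace T

variable {k ℓ m : ℕ}

lemma of_lt (h : m < k) : T k ℓ m = if ℓ ≤ m then 1 else 0 := by
  rw [T, if_pos h]

lemma of_le (hk : 0 < k) (h : k ≤ m) :
    T k ℓ m = ∑ j ∈ range (k - 1), T k ℓ (m + 1 - k + j) := by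
  rw [T, if_neg (by omega), dif_neg (by omega), sum_attach _ fun p => T k ℓ (m - (p + 1)),
    ← sum_range_reflect]
  exact sum_congr rfl fun j hj => by rw [mem_range] at hj; congr 1; omega

lemma one_le (hℓ : 1 ≤ ℓ) (hℓk : ℓ < k) (hm : ℓ ≤ m) : 1 ≤ T k ℓ m := by
  induction m using Nat.strong_induction_on with
  | _ m ih =>
    rcases lt_or_ge m k with h | h
    · rw [of_lt h, if_pos hm]
    · rw [of_le (by omega) h]
      calc 1 ≤ T k ℓ (m + 1 - k + (k - 2)) := ih _ (by omega) (by omega)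
        _ ≤ _ := single_le_sum (f := fun j => T k ℓ (m + 1 - k + j)) (fun _ _ => Nat.zero_le _)
          (mem_range.2 (by omega))

end T

section windowInv

/-- `v m = u m - ∑_{windowStart k m ≤ j < m} u j` are the slack variables of the inequalities
defining `E_{n,k}` (0-indexed). -/
def windowStart (k m : ℕ) : ℕ := if m ≤ k - 2 then m - 1 else m + 1 - k

lemma windowStart_zero (k : ℕ) : windowStart k 0 = 0 := by
  unfold windowStart; split_ifs <;> omega

lemma sum_Ico_windowStart_of_le_of_pos {M : Type*} [AddCommMonoid M] {k m : ℕ} (f : ℕ → M)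
    (h0 : 0 < m) (hm : m ≤ k - 2) : ∑ j ∈ Ico (windowStart k m) m, f j = f (m - 1) := by
  rw [windowStart, if_pos hm, Nat.Ico_pred_singleton h0, sum_singleton]

lemma sum_Ico_windowStart_of_ge {M : Type*} [AddCommMonoid M] {k m : ℕ} (f : ℕ → M)
    (hk : 2 ≤ k) (hm : k - 1 ≤ m) :
    ∑ j ∈ Ico (windowStart k m) m, f j = ∑ j ∈ range (k - 1), f (m + 1 - k + j) := by
  rw [windowStart, if_neg (by omega), sum_Ico_eq_sum_range, show m - (m + 1 - k) = k - 1 by omega]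

/-- Entry `(m, ℓ)` of `(1 - lowerWindow n (windowStart k))⁻¹`: column `ℓ` is a `(k-1)`-bonacci
sequence started by a single `1` in row `ℓ`. For `m < ℓ` the truncated subtraction leaves the
argument of `T k (k - 1)` below `k - 1`, so the entry vanishes as it should. -/
def windowInv (k m ℓ : ℕ) : ℕ :=
  if ℓ ≤ k - 2 then T k (ℓ + 1) (m + 1) else T k (k - 1) (m + k - 1 - ℓ)

variable {k : ℕ}

lemma windowInv_of_le_sub_two (hk : 3 ≤ k) {m : ℕ} (hm : m ≤ k - 2) (ℓ : ℕ) :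
    windowInv k m ℓ = if ℓ ≤ m then 1 else 0 := by
  unfold windowInv
  split_ifs with hℓ <;> rw [T.of_lt (by omega)] <;> split_ifs <;> omega

lemma windowInv_eq_zero_of_lt (hk : 3 ≤ k) {m ℓ : ℕ} (h : m < ℓ) : windowInv k m ℓ = 0 := by
  unfold windowInv
  split_ifs <;> rw [T.of_lt (by omega), if_neg (by omega)]

lemma windowInv_pos (hk : 3 ≤ k) {m ℓ : ℕ} (h : ℓ ≤ m) : 0 < windowInv k m ℓ := by
  unfold windowInv
  split_ifs <;> exact T.one_le (by omega) (by omega) (by omega)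

lemma windowInv_eq (hk : 3 ≤ k) (m ℓ : ℕ) :
    windowInv k m ℓ =
      (if m = ℓ then 1 else 0) + ∑ j ∈ Ico (windowStart k m) m, windowInv k j ℓ := by
  rcases Nat.lt_or_ge m (k - 1) with hm | hm
  · rcases Nat.eq_zero_or_pos m with rfl | hm0
    · rw [windowStart_zero, Ico_self,
        sum_empty, windowInv_of_le_sub_two hk (Nat.zero_le _)]
      split_ifs <;> omega
    rw [sum_Ico_windowStart_of_le_of_pos _ hm0 (by omega), windowInv_of_le_sub_two hk (by omega),
      windowInv_of_le_sub_two hk (by omega)]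
    split_ifs <;> omega
  rw [sum_Ico_windowStart_of_ge _ (by omega) hm]
  by_cases hmℓ : m ≤ ℓ
  · rw [sum_eq_zero fun p hp => windowInv_eq_zero_of_lt hk (by rw [mem_range] at hp; omega)]
    unfold windowInv
    rw [if_neg (by omega), T.of_lt (by omega)]
    split_ifs <;> omega
  rw [if_neg (by omega), zero_add]
  unfold windowInv
  split_ifs <;>
  · rw [T.of_le (by omega) (by omega)]
    exact sum_congr rfl fun p hp => by rw [mem_range] at hp; congr 1; omega

lemma forall_sum_Ico_windowStart_lt_iff {n : ℕ} (hk : 3 ≤ k) (hkn : k ≤ n) (x : ℕ → ℝ) :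
    (∀ m < n, ∑ j ∈ Ico (windowStart k m) m, x j < x m) ↔
      0 < x 0 ∧ (∀ i, 2 ≤ i → i ≤ k - 1 → x (i - 2) < x (i - 1)) ∧
        ∀ i, k ≤ i → i ≤ n → ∑ j : Fin (k - 1), x (i - k + j) < x (i - 1) := by
  constructor
  · intro h
    refine ⟨by simpa [windowStart_zero] using h 0 (by omega), fun i hi2 hik => ?_,
      fun i hki hin => ?_⟩
    · have := h (i - 1) (by omega)
      rwa [sum_Ico_windowStart_of_le_of_pos _ (by omega) (by omega),
        show i - 1 - 1 = i - 2 by omega] at this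
    · have := h (i - 1) (by omega)
      rwa [sum_Ico_windowStart_of_ge _ (by omega) (by omega), show i - 1 + 1 - k = i - k by omega,
        ← Fin.sum_univ_eq_sum_range (fun j => x (i - k + j))] at this
  · rintro ⟨h0, hsmall, hlarge⟩ m hm
    rcases Nat.eq_zero_or_pos m with rfl | hm0
    · simpa [windowStart_zero] using h0
    rcases le_or_gt m (k - 2) with hmk | hmk
    · rw [sum_Ico_windowStart_of_le_of_pos _ hm0 hmk]
      simpa using hsmall (m + 1) (by omega) (by omega)
    · rw [sum_Ico_windowStart_of_ge _ (by omega) (by omega)]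
      have := hlarge (m + 1) (by omega) (by omega)
      rwa [Fin.sum_univ_eq_sum_range (fun j => x (m + 1 - k + j)), Nat.add_sub_cancel] at this

lemma prod_windowInv {M : Type*} [CommMonoid M] {n : ℕ} (hk : 3 ≤ k) (hkn : k ≤ n) (f : ℕ → M) :
    ∏ ℓ : Fin n, f (windowInv k (n - 1) ℓ) =
      (∏ ℓ ∈ Icc 1 (k - 1), f (T k ℓ n)) * ∏ i ∈ Icc 1 (n - k + 1), f (T k (k - 1) (n - i)) := by
  rw [Fin.prod_univ_eq_prod_range (fun ℓ => f (windowInv k (n - 1) ℓ)),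
    ← prod_range_mul_prod_Ico _ (by omega : k - 1 ≤ n)]
  congr 1
  · refine prod_nbij' (· + 1) (· - 1) (by intro; simp) (by intro; simp; omega) (by simp)
      (by intro; simp; omega) fun ℓ hℓ => ?_
    rw [mem_range] at hℓ
    rw [windowInv, if_pos (by omega), Nat.sub_add_cancel (by omega)]
  · refine prod_nbij' (· + 2 - k) (· + k - 2) (by intro; simp; omega) (by intro; simp; omega)
      (by intro; simp; omega) (by intro; simp; omega) fun ℓ hℓ => ?_
    rw [mem_Ico] at hℓ
    rw [windowInv, if_neg (by omega), show n - 1 + k - 1 - ℓ = n - (ℓ + 2 - k) by omega]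

lemma one_sub_lowerWindow_mul_windowInv {R : Type*} [Ring R] {n : ℕ} (hk : 3 ≤ k) :
    (1 - lowerWindow n (windowStart k)) * Matrix.of (fun m ℓ : Fin n => (windowInv k m ℓ : R)) =
      1 := by
  ext m ℓ
  have hNC : (lowerWindow n (windowStart k) * Matrix.of fun m ℓ : Fin n => (windowInv k m ℓ : R) :
      Matrix (Fin n) (Fin n) R) m ℓ = ∑ j ∈ Ico (windowStart k m) m, (windowInv k j ℓ : R) :=
    lowerWindow_mulVec _ (fun j => (windowInv k j ℓ : R)) m
  rw [Matrix.sub_mul, one_mul, Matrix.sub_apply, hNC, Matrix.of_apply, windowInv_eq hk,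
    Matrix.one_apply]
  push_cast
  simp only [Fin.val_inj, add_sub_cancel_right]

section weightedSlack

open Matrix

/-- `u ↦ (c_ℓ v_ℓ)_ℓ`, where `v = (1 - lowerWindow n (windowStart k)) u` are the slack variables
and `c` is the last row of the inverse, so that `∑ ℓ, c_ℓ v_ℓ = u (n - 1)`. -/
def weightedSlack (n k : ℕ) : Matrix (Fin n) (Fin n) ℝ :=
  diagonal (fun ℓ : Fin n => (windowInv k (n - 1) ℓ : ℝ)) * (1 - lowerWindow n (windowStart k))

lemma det_weightedSlack (n k : ℕ) :
    (weightedSlack n k).det = ∏ ℓ : Fin n, (windowInv k (n - 1) ℓ : ℝ) := by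
  rw [weightedSlack, det_mul, det_diagonal, det_one_sub_lowerWindow, mul_one]

lemma mem_preimage_weightedSlack_iff {n : ℕ} (hk : 3 ≤ k) (hn : 0 < n) (x : ℕ → ℝ) :
    (fun i : Fin n => x i) ∈ toLin' (weightedSlack n k) ⁻¹' posSimplex n 1 ↔
      (∀ m < n, ∑ j ∈ Ico (windowStart k m) m, x j < x m) ∧ x (n - 1) ≤ 1 := by
  simp only [Set.mem_preimage, posSimplex, Set.mem_ofPred_eq, toLin'_apply, weightedSlack,
    ← mulVec_mulVec, mulVec_diagonal]
  set v := (1 - lowerWindow n (windowStart k) : Matrix (Fin n) (Fin n) ℝ) *ᵥ fun i : Fin n => x i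
    with hv_def
  have hv (i : Fin n) : v i = x i - ∑ j ∈ Ico (windowStart k i) i, x j := by
    rw [hv_def, sub_mulVec, one_mulVec, Pi.sub_apply, lowerWindow_mulVec]
  have hlast : ∑ ℓ : Fin n, (windowInv k (n - 1) ℓ : ℝ) * v ℓ = x (n - 1) := by
    change (of (fun m ℓ : Fin n => (windowInv k m ℓ : ℝ)) *ᵥ v) ⟨n - 1, by omega⟩ = _
    rw [hv_def, mulVec_mulVec, mul_eq_one_comm.1 (one_sub_lowerWindow_mul_windowInv hk),
      one_mulVec]
  have hc (ℓ : Fin n) : 0 < (windowInv k (n - 1) ℓ : ℝ) :=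
    Nat.cast_pos.2 (windowInv_pos hk (Nat.le_sub_one_of_lt ℓ.isLt))
  rw [hlast]
  simp only [mul_pos_iff_of_pos_left (hc _), hv, sub_pos, Fin.forall_iff]

end weightedSlack

end windowInv

/-- **Volume of `E_{n,k}`.** For `n ≥ 3`, `3 ≤ k ≤ n`, the Lebesgue measure of the set
`E_{n,k}` of `u ∈ ℝ^n` (coordinates indexed `1,…,n`) with `0 < u_1`,
`u_{i-1} < u_i` for `2 ≤ i ≤ k-1`, `∑_{j=i-k+1}^{i-1} u_j < u_i` for `k ≤ i ≤ n`,
and `u_n ≤ 1`, equals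
`(1/n!) · ∏_{ℓ=1}^{k-1} (1/T_{k,ℓ}(n)) · ∏_{i=1}^{n-k+1} (1/T_{k,k-1}(n-i))`. -/
theorem volume_Enk (n k : ℕ) (hk : 3 ≤ k) (hkn : k ≤ n) :
    volume {u : Fin n → ℝ |
        0 < u ⟨0, by omega⟩ ∧
        (∀ i : ℕ, ∀ h2 : 2 ≤ i, ∀ hik : i ≤ k - 1,
          u ⟨i - 2, by omega⟩ < u ⟨i - 1, by omega⟩) ∧
        (∀ i : ℕ, ∀ hki : k ≤ i, ∀ hin : i ≤ n,
          (∑ j : Fin (k - 1), u ⟨i - k + j, by have := j.isLt; omega⟩) <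
            u ⟨i - 1, by omega⟩) ∧
        u ⟨n - 1, by omega⟩ ≤ 1} =
      ((n.factorial : ℝ≥0∞))⁻¹ *
        (∏ ℓ ∈ Finset.Icc 1 (k - 1), ((T k ℓ n : ℝ≥0∞))⁻¹) *
        ∏ i ∈ Finset.Icc 1 (n - k + 1), ((T k (k - 1) (n - i) : ℝ≥0∞))⁻¹ := by
  have hc (ℓ : Fin n) : 0 < windowInv k (n - 1) ℓ := windowInv_pos hk (Nat.le_sub_one_of_lt ℓ.isLt)
  have hdet : LinearMap.det (Matrix.toLin' (weightedSlack n k)) =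
      ∏ ℓ : Fin n, (windowInv k (n - 1) ℓ : ℝ) := by
    rw [LinearMap.det_toLin', det_weightedSlack]
  calc volume _ = volume (Matrix.toLin' (weightedSlack n k) ⁻¹' posSimplex n 1) := by
        congr 1
        ext u
        obtain ⟨x, rfl⟩ : ∃ x : ℕ → ℝ, u = fun i : Fin n => x i :=
          ⟨fun j => if h : j < n then u ⟨j, h⟩ else 0, by ext; simp⟩
        rw [mem_preimage_weightedSlack_iff hk (by omega), forall_sum_Ico_windowStart_lt_iff hk hkn]
        simp [and_assoc]
    _ = _ := by
      have hprod : 0 < ∏ ℓ : Fin n, (windowInv k (n - 1) ℓ : ℝ) :=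
        prod_pos fun ℓ _ => Nat.cast_pos.2 (hc ℓ)
      rw [Measure.addHaar_preimage_linearMap _ (hdet ▸ hprod.ne'), hdet,
        volume_posSimplex n zero_le_one, abs_of_pos (inv_pos.2 hprod), ofReal_inv_prod_natCast _ _ fun ℓ _ => hc ℓ,
        prod_windowInv hk hkn fun a => ((a : ℝ≥0∞))⁻¹, ENNReal.ofReal_one, one_pow, one_div,
        mul_comm, mul_assoc]
end

section
/- Let n ≥ 3. Consider n random lengths drawn independently and uniformly from [0,1], with increasing rearrangement X_(1) ≤ ⋯ ≤ X_(n). Then the probability that X_(1) + X_(2) + ⋯ + X_(n−1) < X_(n) (i.e., that no n-gon can be formed from the n sticks) equals 1/(n−1)!. -/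
open MeasureTheory Finset ENNReal

open Function
open scoped Nat

/-!
Split the event according to the longest stick: it is the disjoint union over `i` of the events
"stick `i` is longer than all the others together", which are congruent under permutations of the
coordinates. For the last stick, the spacings map `y ↦ (y₂ - y₁, …, yₙ - yₙ₋₁, yₙ)`, a linear
map of determinant `±1`, carries the region `0 < y₁ ≤ ⋯ ≤ yₙ ≤ 1` onto that event, and this
region has volume `1 / n!` because its images under the `n!` coordinate permutations tile the
cube up to a null set. Hence the probability is `n / n! = 1 / (n - 1)!`.
-/

section Coordinates

variable {ι : Type*} [Fintype ι]

lemma measurePreserving_comp_perm (σ : Equiv.Perm ι) :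
    MeasurePreserving (fun y : ι → ℝ => y ∘ σ) volume volume :=
  volume_preserving_arrowCongr' σ.symm (MeasurableEquiv.refl ℝ) (.id volume)

lemma volume_setOf_apply_eq_apply {i j : ι} (hij : i ≠ j) :
    volume {y : ι → ℝ | y i = y j} = 0 := by
  classical
  let L : (ι → ℝ) →ₗ[ℝ] ℝ := (LinearMap.proj i : (ι → ℝ) →ₗ[ℝ] ℝ) - LinearMap.proj j
  have hL : {y : ι → ℝ | y i = y j} = (LinearMap.ker L : Set (ι → ℝ)) := by
    ext y
    simp [L, sub_eq_zero]
  rw [hL]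
  refine Measure.addHaar_submodule _ _ fun htop => ?_
  have hsingle : Pi.single i (1 : ℝ) ∈ LinearMap.ker L := htop ▸ Submodule.mem_top
  simp [L, Pi.single_eq_of_ne' hij] at hsingle

lemma volume_compl_setOf_injective : volume {y : ι → ℝ | Injective y}ᶜ = 0 := by
  rw [Set.compl_ofPred]
  refine measure_mono_null (t := ⋃ i, ⋃ j, ⋃ (_ : i ≠ j), {y : ι → ℝ | y i = y j})
    (fun y hy => ?_) (measure_iUnion_null fun i => measure_iUnion_null fun j =>
      measure_iUnion_null fun hij => volume_setOf_apply_eq_apply hij)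
  obtain ⟨i, j, hyij, hij⟩ : ∃ i j, y i = y j ∧ i ≠ j := by
    simpa [Injective, and_comm] using hy
  exact Set.mem_iUnion₂.2 ⟨i, j, Set.mem_iUnion.2 ⟨hij, hyij⟩⟩

end Coordinates

lemma Tuple.eq_sort_of_strictMono {n : ℕ} {α : Type*} [LinearOrder α] {f : Fin n → α}
    {σ : Equiv.Perm (Fin n)} (h : StrictMono (f ∘ σ)) : σ = Tuple.sort f :=
  Tuple.eq_sort_iff.2 ⟨h.monotone, fun _ _ hij hf => absurd hf (h hij).ne⟩

lemma measurableSet_setOf_strictMono {n : ℕ} : MeasurableSet {y : Fin n → ℝ | StrictMono y} := by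
  have : {y : Fin n → ℝ | StrictMono y} = ⋂ i, ⋂ j, ⋂ (_ : i < j), {y | y i < y j} := by
    ext y
    simp [StrictMono]
  rw [this]
  exact .iInter fun i => .iInter fun j => .iInter fun _ =>
    measurableSet_lt (measurable_pi_apply i) (measurable_pi_apply j)

theorem volume_eq_factorial_mul_volume_inter_strictMono {n : ℕ} {s : Set (Fin n → ℝ)}
    (hs : MeasurableSet s) (hperm : ∀ σ : Equiv.Perm (Fin n), (fun y => y ∘ σ) ⁻¹' s = s) :
    volume s = n ! * volume (s ∩ {y | StrictMono y}) := by
  set t := s ∩ {y | StrictMono y}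
  have ht : MeasurableSet t := hs.inter measurableSet_setOf_strictMono
  have hunion : s ∩ {y | Injective y} = ⋃ σ : Equiv.Perm (Fin n), (fun y => y ∘ σ) ⁻¹' t := by
    ext y
    simp only [Set.mem_inter_iff, Set.mem_ofPred_eq, Set.mem_iUnion, Set.mem_preimage, t]
    constructor
    · rintro ⟨hy, hinj⟩
      refine ⟨Tuple.sort y, by rwa [← hperm (Tuple.sort y)] at hy, ?_⟩
      exact (Tuple.monotone_sort y).strictMono_of_injective (hinj.comp (Equiv.injective _))
    · rintro ⟨σ, hy, hmono⟩
      refine ⟨hperm σ ▸ hy, ?_⟩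
      simpa [comp_assoc] using hmono.injective.comp σ.symm.injective
  have hdisj : Pairwise (Disjoint on fun σ : Equiv.Perm (Fin n) => (fun y => y ∘ σ) ⁻¹' t) := by
    refine fun σ τ hστ => Set.disjoint_left.2 fun y hσ hτ => hστ ?_
    exact (Tuple.eq_sort_of_strictMono hσ.2).trans (Tuple.eq_sort_of_strictMono hτ.2).symm
  calc volume s = volume (s ∩ {y | Injective y}) :=
        (measure_inter_conull volume_compl_setOf_injective).symm
    _ = ∑ σ : Equiv.Perm (Fin n), volume ((fun y => y ∘ σ) ⁻¹' t) := by
      rw [hunion, measure_iUnion hdisj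
        fun σ => ht.preimage (measurePreserving_comp_perm σ).measurable, tsum_fintype]
    _ = n ! * volume t := by
      simp only [fun σ => (measurePreserving_comp_perm σ).measure_preimage ht.nullMeasurableSet,
        sum_const, Finset.card_univ, Fintype.card_perm, Fintype.card_fin, nsmul_eq_mul]

section Spacings

variable {m : ℕ}

def spacings (m : ℕ) : (Fin (m + 1) → ℝ) →ₗ[ℝ] Fin (m + 1) → ℝ where
  toFun y := Fin.snoc (fun k => y k.succ - y k.castSucc) (y (Fin.last m))
  map_add' y z := by
    ext i
    refine Fin.lastCases ?_ (fun k => ?_) i <;>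
      simp only [Fin.snoc_last, Fin.snoc_castSucc, Pi.add_apply]
    ring
  map_smul' c y := by
    ext i
    refine Fin.lastCases ?_ (fun k => ?_) i <;>
      simp only [Fin.snoc_last, Fin.snoc_castSucc, Pi.smul_apply, smul_eq_mul, RingHom.id_apply]
    ring

@[simp]
lemma spacings_apply_castSucc (y : Fin (m + 1) → ℝ) (k : Fin m) :
    spacings m y k.castSucc = y k.succ - y k.castSucc := by
  simp [spacings]

@[simp]
lemma spacings_apply_last (y : Fin (m + 1) → ℝ) : spacings m y (Fin.last m) = y (Fin.last m) := by
  simp [spacings]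

lemma sum_spacings (y : Fin (m + 1) → ℝ) : ∑ i, spacings m y i = 2 * y (Fin.last m) - y 0 := by
  have hsucc := Fin.sum_univ_succ y
  have hcastSucc := Fin.sum_univ_castSucc y
  rw [Fin.sum_univ_castSucc]
  simp only [spacings_apply_castSucc, spacings_apply_last, sum_sub_distrib]
  linarith

lemma det_spacings : LinearMap.det (spacings m) = (-1) ^ m := by
  have htri : (LinearMap.toMatrix' (spacings m)).IsUpperTriangular := by
    intro i j hji
    rw [LinearMap.toMatrix'_apply]
    induction i using Fin.lastCases with
    | last =>
      have hj : j < Fin.last m := hji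
      simp [Pi.single_eq_of_ne (ne_of_gt hj)]
    | cast k =>
      have hjk : j < k.castSucc := hji
      simp [Pi.single_eq_of_ne (ne_of_gt hjk),
        Pi.single_eq_of_ne (ne_of_gt (hjk.trans Fin.castSucc_lt_succ))]
  rw [← LinearMap.det_toMatrix', Matrix.det_of_isUpperTriangular htri, Fin.prod_univ_castSucc]
  simp [LinearMap.toMatrix'_apply, Fin.castSucc_lt_succ.ne']

lemma volume_preimage_spacings (s : Set (Fin (m + 1) → ℝ)) :
    volume (spacings m ⁻¹' s) = volume s := by
  rw [Measure.addHaar_preimage_linearMap _ (by simp [det_spacings]), det_spacings]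
  simp

end Spacings

def exceedsRest {n : ℕ} (i : Fin n) : Set (Fin n → ℝ) :=
  {x | (∀ j, x j ∈ Set.Icc 0 1) ∧ ∑ j, x j < 2 * x i}

lemma sum_lt_sort_last_iff {m : ℕ} (x : Fin (m + 1) → ℝ) :
    ∑ j : Fin m, x (Tuple.sort x j.castSucc) < x (Tuple.sort x (Fin.last m)) ↔
      ∃ i, ∑ j, x j < 2 * x i := by
  have hsum :
      ∑ j : Fin m, x (Tuple.sort x j.castSucc) = ∑ j, x j - x (Tuple.sort x (Fin.last m)) := by
    rw [← Equiv.sum_comp (Tuple.sort x) x, Fin.sum_univ_castSucc]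
    ring
  have hmax : ∀ i, x i ≤ x (Tuple.sort x (Fin.last m)) := fun i => by
    simpa using Tuple.monotone_sort x (Fin.le_last ((Tuple.sort x).symm i))
  rw [hsum]
  constructor
  · intro h
    exact ⟨Tuple.sort x (Fin.last m), by linarith⟩
  · rintro ⟨i, hi⟩
    linarith [hmax i]

lemma measurableSet_exceedsRest {n : ℕ} (i : Fin n) : MeasurableSet (exceedsRest i) := by
  have hcube : MeasurableSet {x : Fin n → ℝ | ∀ j, x j ∈ Set.Icc 0 1} := by
    rw [Set.ofPred_forall]
    exact .iInter fun j => measurableSet_Icc.preimage (measurable_pi_apply j)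
  exact hcube.inter (measurableSet_lt (measurable_sum _ fun j _ => measurable_pi_apply j)
    ((measurable_pi_apply i).const_mul 2))

lemma preimage_comp_perm_exceedsRest {n : ℕ} (σ : Equiv.Perm (Fin n)) (i : Fin n) :
    (fun x => x ∘ σ) ⁻¹' exceedsRest i = exceedsRest (σ i) := by
  ext x
  simp only [exceedsRest, Set.mem_preimage, Set.mem_ofPred_eq, comp_apply, Equiv.sum_comp σ x]
  exact and_congr_left' (σ.surjective.forall (p := fun j => x j ∈ Set.Icc 0 1)).symm

lemma pairwise_disjoint_exceedsRest {n : ℕ} : Pairwise (Disjoint on exceedsRest (n := n)) := by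
  refine fun i j hij => Set.disjoint_left.2 fun x ⟨hx, hi⟩ ⟨_, hj⟩ => ?_
  have : x i + x j ≤ ∑ k, x k := by
    simpa [sum_pair hij] using
      sum_le_sum_of_subset_of_nonneg (subset_univ {i, j}) fun k _ _ => (hx k).1
  linarith

lemma spacings_preimage_exceedsRest_last (m : ℕ) :
    spacings m ⁻¹' exceedsRest (Fin.last m) =
      {y | Monotone y ∧ 0 < y 0 ∧ y (Fin.last m) ≤ 1} := by
  ext y
  simp only [exceedsRest, Set.mem_preimage, Set.mem_ofPred_eq, sum_spacings, Fin.forall_fin_succ',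
    spacings_apply_castSucc, spacings_apply_last, Set.mem_Icc, sub_nonneg,
    Fin.monotone_iff_le_succ]
  constructor
  · rintro ⟨⟨hstep, -, hle⟩, hlt⟩
    exact ⟨fun k => (hstep k).1, by linarith, hle⟩
  · rintro ⟨hstep, hpos, hle⟩
    have hmono : Monotone y := Fin.monotone_iff_le_succ.2 hstep
    refine ⟨⟨fun k => ⟨hstep k, ?_⟩, hpos.le.trans (hmono (Fin.zero_le _)), hle⟩, by linarith⟩
    linarith [hmono (Fin.le_last k.succ), hmono (Fin.zero_le k.castSucc)]

lemma volume_exceedsRest_last (m : ℕ) :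
    volume (exceedsRest (Fin.last m)) = ((m + 1)! : ℝ≥0∞)⁻¹ := by
  set C := Set.univ.pi fun _ : Fin (m + 1) => Set.Ioc (0 : ℝ) 1
  have hC : volume C = 1 := by simp [C, volume_pi_pi]
  have hCperm : ∀ σ : Equiv.Perm (Fin (m + 1)), (fun y => y ∘ σ) ⁻¹' C = C := fun σ => by
    ext y
    simp only [C, Set.mem_preimage, Set.mem_univ_pi, comp_apply]
    exact (σ.surjective.forall (p := fun i => y i ∈ Set.Ioc 0 1)).symm
  have hinj : {y : Fin (m + 1) → ℝ | Monotone y ∧ 0 < y 0 ∧ y (Fin.last m) ≤ 1} ∩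
      {y | Injective y} = C ∩ {y | StrictMono y} := by
    ext y
    simp only [C, Set.mem_inter_iff, Set.mem_ofPred_eq, Set.mem_univ_pi, Set.mem_Ioc]
    constructor
    · rintro ⟨⟨hmono, hpos, hle⟩, hy⟩
      exact ⟨fun i => ⟨hpos.trans_le (hmono (Fin.zero_le i)), (hmono (Fin.le_last i)).trans hle⟩,
        hmono.strictMono_of_injective hy⟩
    · rintro ⟨hC, hy⟩
      exact ⟨⟨hy.monotone, (hC 0).1, (hC _).2⟩, hy.injective⟩
  rw [← volume_preimage_spacings, spacings_preimage_exceedsRest_last,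
    ← measure_inter_conull volume_compl_setOf_injective, hinj]
  refine ENNReal.eq_inv_of_mul_eq_one_left ?_
  rw [mul_comm, ← volume_eq_factorial_mul_volume_inter_strictMono
    (MeasurableSet.univ_pi fun _ => measurableSet_Ioc) hCperm, hC]

lemma volume_exceedsRest {m : ℕ} (i : Fin (m + 1)) :
    volume (exceedsRest i) = ((m + 1)! : ℝ≥0∞)⁻¹ := by
  rw [← Equiv.swap_apply_left (Fin.last m) i, ← preimage_comp_perm_exceedsRest,
    (measurePreserving_comp_perm _).measure_preimage
      (measurableSet_exceedsRest _).nullMeasurableSet, volume_exceedsRest_last]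

/-- For `n ≥ 3`, the probability that the `n` sticks cannot form an `n`-gon, i.e. that
`X_(1) + ⋯ + X_(n-1) < X_(n)` for the order statistics, equals `1/(n-1)!`. -/
theorem pickup_sticks_no_ngon_prob (n : ℕ) (hn : 3 ≤ n) :
    volume {x : Fin n → ℝ | (∀ i, x i ∈ Set.Icc (0 : ℝ) 1) ∧
        (∑ j : Fin (n - 1), (x ∘ Tuple.sort x) ⟨j, by have := j.isLt; omega⟩) <
          (x ∘ Tuple.sort x) ⟨n - 1, by omega⟩} =
      1 / ((n - 1).factorial : ℝ≥0∞) := by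
  obtain ⟨m, rfl⟩ : ∃ m, n = m + 1 := ⟨n - 1, by omega⟩
  trans volume (⋃ i : Fin (m + 1), exceedsRest i)
  · congr 1
    ext x
    simp only [Set.mem_iUnion, exceedsRest, Set.mem_ofPred_eq, exists_and_left]
    exact and_congr_right fun _ => sum_lt_sort_last_iff x
  rw [measure_iUnion pairwise_disjoint_exceedsRest measurableSet_exceedsRest, tsum_fintype]
  simp only [volume_exceedsRest, sum_const, Finset.card_univ, Fintype.card_fin, nsmul_eq_mul,
    Nat.add_sub_cancel, one_div, Nat.factorial_succ, Nat.cast_mul]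
  rw [ENNReal.mul_inv (by simp) (by simp), ← mul_assoc, ENNReal.mul_inv_cancel (by simp) (by simp),
    one_mul]
end

section
/- Let n ≥ 3. Consider n random lengths drawn independently and uniformly from [0,1], with increasing rearrangement X_(1) ≤ ⋯ ≤ X_(n). Then the probability that X_(i) + X_(i+1) < X_(i+2) for every 1 ≤ i ≤ n−2 (i.e., that no triangle can be formed from any three of the sticks) equals 1 / ∏_{i=1}^{n} F_i, where F_i denotes the i-th Fibonacci number (F_1 = F_2 = 1, F_{i+2} = F_i + F_{i+1}). -/
open MeasureTheory Finset ENNReal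

/-! ### Auxiliary lemmas -/

theorem PkSt.mp_comp (n : ℕ) (σ : Equiv.Perm (Fin n)) :
    MeasurePreserving (fun x : Fin n → ℝ => x ∘ σ) volume volume := by
  have h := volume_measurePreserving_piCongrLeft (fun _ : Fin n => ℝ) σ.symm
  convert h using 1
  funext x; ext b
  simp [MeasurableEquiv.coe_piCongrLeft, Equiv.piCongrLeft, Equiv.piCongrLeft']

theorem PkSt.perm_union (n : ℕ) (B : Set (Fin n → ℝ)) (hB : MeasurableSet B)
    (hB' : ∀ y ∈ B, StrictMono y) :
    volume (⋃ σ : Equiv.Perm (Fin n), {x | x ∘ σ ∈ B}) = (n.factorial : ℝ≥0∞) * volume B := by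
  have hmeas : ∀ σ : Equiv.Perm (Fin n), MeasurableSet {x : Fin n → ℝ | x ∘ σ ∈ B} :=
    fun σ => (PkSt.mp_comp n σ).measurable hB
  have hdisj : Pairwise (Function.onFun Disjoint (fun σ : Equiv.Perm (Fin n) => {x | x ∘ σ ∈ B})) := by
    intro σ τ hστ
    refine Set.disjoint_left.mpr fun x hxσ hxτ => hστ ?_
    have h1 : StrictMono (x ∘ σ) := hB' _ hxσ
    have h2 : StrictMono (x ∘ τ) := hB' _ hxτ
    have hinj : Function.Injective x := by
      have h3 : Function.Injective ((x ∘ σ) ∘ σ.symm) := h1.injective.comp σ.symm.injective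
      have h4 : (x ∘ σ) ∘ σ.symm = x := by funext a; simp
      rwa [h4] at h3
    have he : x ∘ σ = x ∘ τ := by
      rw [Tuple.comp_sort_eq_comp_iff_monotone.mpr h1.monotone,
        ← Tuple.comp_sort_eq_comp_iff_monotone.mpr h2.monotone]
    exact Equiv.ext fun a => hinj (congrFun he a)
  rw [measure_iUnion hdisj hmeas, tsum_fintype]
  have hv : ∀ σ : Equiv.Perm (Fin n), volume {x : Fin n → ℝ | x ∘ σ ∈ B} = volume B :=
    fun σ => (PkSt.mp_comp n σ).measure_preimage hB.nullMeasurableSet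
  rw [Finset.sum_congr rfl fun σ _ => hv σ]
  simp [Finset.sum_const, Fintype.card_perm, Fintype.card_fin, nsmul_eq_mul]

theorem PkSt.coord_null (n : ℕ) (i : Fin n) (c : ℝ) :
    volume {x : Fin n → ℝ | x i = c} = 0 := by
  have h : {x : Fin n → ℝ | x i = c} = Function.eval i ⁻¹' ({c} : Set ℝ) := rfl
  rw [h, Set.eval_preimage, volume_pi_pi]
  exact Finset.prod_eq_zero (Finset.mem_univ i) (by simp)

theorem PkSt.hyp_null (n : ℕ) (i j : Fin n) (h : i ≠ j) :
    volume {x : Fin n → ℝ | x i = x j} = 0 := by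
  have heq : {x : Fin n → ℝ | x i = x j} =
      ↑(LinearMap.ker ((LinearMap.proj i : (Fin n → ℝ) →ₗ[ℝ] ℝ) - LinearMap.proj j)) := by
    ext x
    simp [LinearMap.mem_ker, sub_eq_zero]
  rw [heq]
  apply Measure.addHaar_submodule
  intro htop
  have := Submodule.eq_top_iff'.mp htop (Pi.single i 1)
  simp [LinearMap.mem_ker, Pi.single_apply, h, h.symm] at this

theorem PkSt.noninj_null (n : ℕ) :
    volume {x : Fin n → ℝ | ¬ Function.Injective x} = 0 := by
  have hsub : {x : Fin n → ℝ | ¬ Function.Injective x} ⊆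
      ⋃ (p : Fin n × Fin n) (_ : p.1 ≠ p.2), {x | x p.1 = x p.2} := by
    intro x hx
    simp only [Set.mem_setOf_eq, Function.Injective, not_forall] at hx
    obtain ⟨a, b, hab, hne⟩ := hx
    exact Set.mem_iUnion.mpr ⟨(a, b), Set.mem_iUnion.mpr ⟨hne, hab⟩⟩
  refine measure_mono_null hsub ?_
  refine measure_iUnion_null fun p => ?_
  by_cases hp : p.1 = p.2
  · simp [hp]
  · simpa [hp] using PkSt.hyp_null n p.1 p.2 hp

def PkSt.Oreg (n : ℕ) : Set (Fin n → ℝ) :=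
  {y | StrictMono y ∧ ∀ i, y i ∈ Set.Ioo (0:ℝ) 1}

def PkSt.Δ1 (n : ℕ) : Set (Fin n → ℝ) :=
  {u | (∀ i, 0 < u i) ∧ ∑ i, u i < 1}

noncomputable def PkSt.Pmap (n : ℕ) : (Fin n → ℝ) →ₗ[ℝ] (Fin n → ℝ) :=
  Matrix.toLin' (Matrix.of fun m i : Fin n => if i ≤ m then (1:ℝ) else 0)

namespace PkSt

theorem Pmap_apply (n : ℕ) (u : Fin n → ℝ) (m : Fin n) :
    Pmap n u m = ∑ i : Fin n, (if i ≤ m then (1:ℝ) else 0) * u i := by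
  simp [Pmap, Matrix.toLin'_apply, Matrix.mulVec, dotProduct]

theorem Pmap_zero (n : ℕ) (u : Fin n → ℝ) (h : 0 < n) :
    Pmap n u ⟨0, h⟩ = u ⟨0, h⟩ := by
  rw [Pmap_apply]
  rw [Finset.sum_eq_single ⟨0, h⟩]
  · simp
  · intro b _ hb
    have hb' : (b:ℕ) ≠ 0 := fun e => hb (Fin.ext e)
    have hle : ¬ b ≤ ⟨0, h⟩ := by simp only [Fin.le_def]; omega
    simp [hle]
  · intro hmem; exact absurd (Finset.mem_univ _) hmem

theorem Pmap_succ (n : ℕ) (u : Fin n → ℝ) (m : ℕ) (h : m + 1 < n) :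
    Pmap n u ⟨m+1, h⟩ = Pmap n u ⟨m, by omega⟩ + u ⟨m+1, h⟩ := by
  simp only [Pmap_apply]
  have key : ∀ i : Fin n, (if i ≤ (⟨m+1, h⟩ : Fin n) then (1:ℝ) else 0) * u i
      = (if i ≤ (⟨m, by omega⟩ : Fin n) then (1:ℝ) else 0) * u i
        + (if i = (⟨m+1, h⟩ : Fin n) then (1:ℝ) else 0) * u i := by
    intro i
    rcases lt_trichotomy (i : ℕ) (m+1) with hi | hi | hi
    · have h1 : i ≤ (⟨m+1, h⟩ : Fin n) := by simp [Fin.le_def]; omega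
      have h2 : i ≤ (⟨m, by omega⟩ : Fin n) := by simp [Fin.le_def]; omega
      have h3 : i ≠ (⟨m+1, h⟩ : Fin n) := by simp [Fin.ext_iff]; omega
      simp [h1, h2, h3]
    · have h1 : i = (⟨m+1, h⟩ : Fin n) := by simp [Fin.ext_iff]; omega
      have h2 : ¬ i ≤ (⟨m, by omega⟩ : Fin n) := by simp [Fin.le_def]; omega
      simp [h1, h2]
    · have h1 : ¬ i ≤ (⟨m+1, h⟩ : Fin n) := by simp [Fin.le_def]; omega
      have h2 : ¬ i ≤ (⟨m, by omega⟩ : Fin n) := by simp [Fin.le_def]; omega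
      have h3 : i ≠ (⟨m+1, h⟩ : Fin n) := by simp [Fin.ext_iff]; omega
      simp [h1, h2, h3]
  rw [Finset.sum_congr rfl fun i _ => key i, Finset.sum_add_distrib]
  congr 1
  rw [Finset.sum_eq_single ⟨m+1, h⟩] <;> simp +contextual

theorem strictMono_of_succ (n : ℕ) (y : Fin n → ℝ)
    (h : ∀ m (hm : m+1 < n), y ⟨m, by omega⟩ < y ⟨m+1, hm⟩) : StrictMono y := by
  have key : ∀ (b a : ℕ) (hb : b < n) (hab : a < b), y ⟨a, hab.trans hb⟩ < y ⟨b, hb⟩ := by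
    intro b
    induction b with
    | zero => intro a hb hab; omega
    | succ c ih =>
      intro a hb hab
      rcases Nat.lt_or_ge a c with h1 | h1
      · exact lt_trans (ih a (by omega) h1) (h c hb)
      · have : a = c := by omega
        subst this
        exact h a hb
  intro a b hab
  have := key b a b.isLt (Fin.lt_def.mp hab)
  simpa using this

theorem Pmap_image (n : ℕ) (hn : 0 < n) : Pmap n '' Δ1 n = Oreg n := by
  ext y
  constructor
  · rintro ⟨u, ⟨hu, hsum⟩, rfl⟩
    constructor
    · apply strictMono_of_succ
      intro m hm
      rw [Pmap_succ n u m hm]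
      have := hu ⟨m+1, hm⟩
      linarith
    · intro i
      constructor
      · rw [Pmap_apply]
        apply Finset.sum_pos'
        · intro j _
          rcases le_or_gt j i with h | h
          · simp [h]; exact (hu j).le
          · simp [not_le.mpr h]
        · exact ⟨i, Finset.mem_univ i, by simp [(hu i)]⟩
      · rw [Pmap_apply]
        calc ∑ j : Fin n, (if j ≤ i then (1:ℝ) else 0) * u j
            ≤ ∑ j : Fin n, u j := by
              apply Finset.sum_le_sum
              intro j _
              rcases le_or_gt j i with h | h
              · simp [h]
              · simp [not_le.mpr h]; exact (hu j).le
          _ < 1 := hsum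
  · rintro ⟨hmono, hio⟩
    set u : Fin n → ℝ := fun i =>
      if h0 : (i:ℕ) = 0 then y i else y i - y ⟨(i:ℕ)-1, by omega⟩ with hu
    have hPmu : ∀ m (hm : m < n), Pmap n u ⟨m, hm⟩ = y ⟨m, hm⟩ := by
      intro m
      induction m with
      | zero => intro hm; rw [Pmap_zero n u hm]; simp [hu]
      | succ c ih =>
        intro hm
        rw [Pmap_succ n u c hm, ih (by omega)]
        simp only [hu]
        norm_num
    refine ⟨u, ⟨?_, ?_⟩, ?_⟩
    · intro i
      by_cases h0 : (i:ℕ) = 0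
      · simp only [hu, h0, dif_pos]
        exact (hio i).1
      · simp only [hu, dif_neg h0]
        have : (⟨(i:ℕ)-1, by omega⟩ : Fin n) < i := by
          simp [Fin.lt_def]; omega
        linarith [hmono this]
    · have h : ∑ i, u i = Pmap n u ⟨n-1, by omega⟩ := by
        rw [Pmap_apply]
        apply Finset.sum_congr rfl
        intro j _
        have : j ≤ (⟨n-1, by omega⟩ : Fin n) := by
          simp [Fin.le_def]; omega
        simp [this]
      rw [h, hPmu (n-1) (by omega)]
      exact (hio _).2
    · funext m
      exact hPmu m.1 m.isLt ▸ (by congr)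

theorem det_lower (n : ℕ) (M : Matrix (Fin n) (Fin n) ℝ)
    (h : ∀ i j : Fin n, i < j → M i j = 0) (hd : ∀ i, M i i = 1) :
    LinearMap.det (Matrix.toLin' M) = 1 := by
  rw [LinearMap.det_toLin', Matrix.det_of_lowerTriangular M (fun i j hij => h i j hij)]
  simp [hd]

theorem det_Pmap (n : ℕ) : LinearMap.det (Pmap n) = 1 := by
  apply det_lower
  · intro i j hij
    simp [Pmap, Matrix.of_apply, not_le.mpr hij]
  · intro i; simp [Pmap, Matrix.of_apply]

theorem measurable_Oreg (n : ℕ) : MeasurableSet (Oreg n) := by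
  have h : Oreg n = (⋂ (p : Fin n × Fin n) (_ : p.1 < p.2), {y : Fin n → ℝ | y p.1 < y p.2}) ∩
      ⋂ i, {y : Fin n → ℝ | y i ∈ Set.Ioo (0:ℝ) 1} := by
    ext y
    simp only [Oreg, Set.mem_setOf_eq, Set.mem_inter_iff, Set.mem_iInter]
    constructor
    · rintro ⟨h1, h2⟩
      exact ⟨fun p hp => h1 hp, h2⟩
    · rintro ⟨h1, h2⟩
      exact ⟨fun a b hab => h1 (a, b) hab, h2⟩
  rw [h]
  refine MeasurableSet.inter ?_ ?_
  · exact MeasurableSet.iInter fun p => MeasurableSet.iInter fun _ =>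
      measurableSet_lt (measurable_pi_apply p.1) (measurable_pi_apply p.2)
  · exact MeasurableSet.iInter fun i => (measurable_pi_apply i) measurableSet_Ioo

theorem vol_Oreg (n : ℕ) :
    (n.factorial : ℝ≥0∞) * volume (Oreg n) = 1 := by
  rw [← perm_union n (Oreg n) (measurable_Oreg n) (fun y hy => hy.1)]
  set U := ⋃ σ : Equiv.Perm (Fin n), {x : Fin n → ℝ | x ∘ σ ∈ Oreg n} with hU
  have hUsub : U ⊆ Set.pi Set.univ (fun _ : Fin n => Set.Ioo (0:ℝ) 1) := by
    intro x hx
    obtain ⟨σ, hσ⟩ := Set.mem_iUnion.mp hx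
    intro i _
    have := hσ.2 (σ.symm i)
    simpa using this
  have hsup : Set.pi Set.univ (fun _ : Fin n => Set.Ioo (0:ℝ) 1) ⊆
      U ∪ {x : Fin n → ℝ | ¬ Function.Injective x} := by
    intro x hx
    by_cases hinj : Function.Injective x
    · left
      refine Set.mem_iUnion.mpr ⟨Tuple.sort x, ?_, ?_⟩
      · exact (Tuple.monotone_sort x).strictMono_of_injective
          (hinj.comp (Tuple.sort x).injective)
      · intro i
        exact hx (Tuple.sort x i) (Set.mem_univ _)
    · right; exact hinj
  have hvol_pi : volume (Set.pi Set.univ (fun _ : Fin n => Set.Ioo (0:ℝ) 1)) = 1 := by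
    rw [volume_pi_pi]
    simp [Real.volume_Ioo]
  have h1 : volume U ≤ 1 := hvol_pi ▸ measure_mono hUsub
  have h2 : (1:ℝ≥0∞) ≤ volume U := by
    calc (1:ℝ≥0∞) = volume (Set.pi Set.univ (fun _ : Fin n => Set.Ioo (0:ℝ) 1)) := hvol_pi.symm
      _ ≤ volume (U ∪ {x : Fin n → ℝ | ¬ Function.Injective x}) := measure_mono hsup
      _ ≤ volume U + volume {x : Fin n → ℝ | ¬ Function.Injective x} := measure_union_le _ _
      _ = volume U := by rw [noninj_null n, add_zero]
  exact le_antisymm h1 h2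

theorem vol_Δ1 (n : ℕ) (hn : 0 < n) :
    volume (Δ1 n) = ((n.factorial : ℝ≥0∞))⁻¹ := by
  have himg : volume (Oreg n) = volume (Δ1 n) := by
    rw [← Pmap_image n hn, Measure.addHaar_image_linearMap, det_Pmap]
    simp
  have h := vol_Oreg n
  rw [himg] at h
  have hne : (n.factorial : ℝ≥0∞) ≠ 0 := by simp [Nat.factorial_ne_zero]
  have hnt : (n.factorial : ℝ≥0∞) ≠ ⊤ := natCast_ne_top _
  have h2 := congrArg (fun t => ((n.factorial : ℝ≥0∞))⁻¹ * t) h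
  simpa [← mul_assoc, ENNReal.inv_mul_cancel hne hnt] using h2

end PkSt

namespace PkSt

theorem noPolygon_three_iff (n : ℕ) (y : Fin n → ℝ) :
    NoPolygon n 3 y ↔ ∀ m : ℕ, ∀ hm : m + 2 < n,
      y ⟨m, by omega⟩ + y ⟨m+1, by omega⟩ < y ⟨m+2, hm⟩ := by
  unfold NoPolygon
  constructor
  · intro h m hm
    have := h m hm
    rwa [Fin.sum_univ_two] at this
  · intro h m hm
    rw [Fin.sum_univ_two]
    exact h m hm

noncomputable def Lmap (n : ℕ) : (Fin n → ℝ) →ₗ[ℝ] (Fin n → ℝ) :=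
  Matrix.toLin' (Matrix.of fun m i : Fin n =>
    if i ≤ m then (Nat.fib ((m:ℕ) - (i:ℕ) + 1) : ℝ) else 0)

theorem Lmap_apply (n : ℕ) (u : Fin n → ℝ) (m : Fin n) :
    Lmap n u m = ∑ i : Fin n,
      (if i ≤ m then (Nat.fib ((m:ℕ) - (i:ℕ) + 1) : ℝ) else 0) * u i := by
  simp [Lmap, Matrix.toLin'_apply, Matrix.mulVec, dotProduct]

theorem Lmap_zero (n : ℕ) (u : Fin n → ℝ) (h : 0 < n) :
    Lmap n u ⟨0, h⟩ = u ⟨0, h⟩ := by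
  rw [Lmap_apply, Finset.sum_eq_single ⟨0, h⟩]
  · simp
  · intro b _ hb
    have hb' : (b:ℕ) ≠ 0 := fun e => hb (Fin.ext e)
    have hle : ¬ b ≤ ⟨0, h⟩ := by simp only [Fin.le_def]; omega
    simp [hle]
  · intro hmem; exact absurd (Finset.mem_univ _) hmem

theorem Lmap_one (n : ℕ) (u : Fin n → ℝ) (h : 1 < n) :
    Lmap n u ⟨1, h⟩ = u ⟨0, by omega⟩ + u ⟨1, h⟩ := by
  rw [Lmap_apply]
  rw [show (Finset.univ : Finset (Fin n)) = insert ⟨0, by omega⟩ (Finset.univ.erase ⟨0, by omega⟩) by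
    rw [Finset.insert_erase (Finset.mem_univ _)]]
  rw [Finset.sum_insert (Finset.notMem_erase _ _)]
  have h0 : ((⟨0, by omega⟩ : Fin n) ≤ ⟨1, h⟩) := by simp [Fin.le_def]
  rw [Finset.sum_eq_single_of_mem (⟨1, h⟩ : Fin n) (Finset.mem_erase.mpr ⟨by simp [Fin.ext_iff], Finset.mem_univ _⟩)]
  · simp [h0]
  · intro b hb hb1
    have hb0 : (b:ℕ) ≠ 0 := fun e => (Finset.mem_erase.mp hb).1 (Fin.ext e)
    have hb1' : (b:ℕ) ≠ 1 := fun e => hb1 (Fin.ext e)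
    have hle : ¬ b ≤ ⟨1, h⟩ := by simp only [Fin.le_def]; omega
    simp [hle]

theorem Lmap_rec (n : ℕ) (u : Fin n → ℝ) (m : ℕ) (h : m + 2 < n) :
    Lmap n u ⟨m+2, h⟩ = Lmap n u ⟨m, by omega⟩ + Lmap n u ⟨m+1, by omega⟩ + u ⟨m+2, h⟩ := by
  simp only [Lmap_apply]
  have key : ∀ i : Fin n,
      (if i ≤ (⟨m+2, h⟩ : Fin n) then (Nat.fib ((m+2) - (i:ℕ) + 1) : ℝ) else 0) * u i
      = (if i ≤ (⟨m, by omega⟩ : Fin n) then (Nat.fib (m - (i:ℕ) + 1) : ℝ) else 0) * u i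
        + (if i ≤ (⟨m+1, by omega⟩ : Fin n) then (Nat.fib ((m+1) - (i:ℕ) + 1) : ℝ) else 0) * u i
        + (if i = (⟨m+2, h⟩ : Fin n) then (1:ℝ) else 0) * u i := by
    intro i
    rcases Nat.lt_or_ge (i:ℕ) (m+1) with hi | hi
    · have h1 : i ≤ (⟨m+2, h⟩ : Fin n) := by simp [Fin.le_def]; omega
      have h2 : i ≤ (⟨m, by omega⟩ : Fin n) := by simp [Fin.le_def]; omega
      have h3 : i ≤ (⟨m+1, by omega⟩ : Fin n) := by simp [Fin.le_def]; omega
      have h4 : i ≠ (⟨m+2, h⟩ : Fin n) := by simp [Fin.ext_iff]; omega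
      simp only [if_pos h1, if_pos h2, if_pos h3, if_neg h4, zero_mul, add_zero]
      rw [← add_mul]
      congr 1
      rw [show (m+2) - (i:ℕ) + 1 = (m - (i:ℕ) + 1) + 2 by omega,
        show (m+1) - (i:ℕ) + 1 = (m - (i:ℕ) + 1) + 1 by omega,
        Nat.fib_add_two]
      push_cast
      ring
    · rcases Nat.eq_or_lt_of_le hi with hi' | hi'
      · have h1 : i ≤ (⟨m+2, h⟩ : Fin n) := by simp [Fin.le_def]; omega
        have h2 : ¬ i ≤ (⟨m, by omega⟩ : Fin n) := by simp [Fin.le_def]; omega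
        have h3 : i ≤ (⟨m+1, by omega⟩ : Fin n) := by simp [Fin.le_def]; omega
        have h4 : i ≠ (⟨m+2, h⟩ : Fin n) := by simp [Fin.ext_iff]; omega
        simp only [if_pos h1, if_neg h2, if_pos h3, if_neg h4, zero_mul, add_zero, zero_add]
        rw [show (m+2) - (i:ℕ) + 1 = 2 by omega, show (m+1) - (i:ℕ) + 1 = 1 by omega]
        norm_num
      · rcases Nat.eq_or_lt_of_le hi' with hi'' | hi''
        · have h1 : i ≤ (⟨m+2, h⟩ : Fin n) := by simp [Fin.le_def]; omega
          have h2 : ¬ i ≤ (⟨m, by omega⟩ : Fin n) := by simp [Fin.le_def]; omega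
          have h3 : ¬ i ≤ (⟨m+1, by omega⟩ : Fin n) := by simp [Fin.le_def]; omega
          have h4 : i = (⟨m+2, h⟩ : Fin n) := by simp [Fin.ext_iff]; omega
          simp only [if_pos h1, if_neg h2, if_neg h3, if_pos h4, zero_add]
          rw [show (m+2) - (i:ℕ) + 1 = 1 by omega]
          norm_num
        · have h1 : ¬ i ≤ (⟨m+2, h⟩ : Fin n) := by simp [Fin.le_def]; omega
          have h2 : ¬ i ≤ (⟨m, by omega⟩ : Fin n) := by simp [Fin.le_def]; omega
          have h3 : ¬ i ≤ (⟨m+1, by omega⟩ : Fin n) := by simp [Fin.le_def]; omega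
          have h4 : i ≠ (⟨m+2, h⟩ : Fin n) := by simp [Fin.ext_iff]; omega
          simp [h1, h2, h3, h4]
  rw [Finset.sum_congr rfl fun i _ => key i, Finset.sum_add_distrib, Finset.sum_add_distrib]
  congr 1
  rw [Finset.sum_eq_single ⟨m+2, h⟩] <;> simp +contextual

theorem Lmap_last (n : ℕ) (u : Fin n → ℝ) (hn : 0 < n) :
    Lmap n u ⟨n-1, by omega⟩ = ∑ i : Fin n, (Nat.fib (n - (i:ℕ)) : ℝ) * u i := by
  rw [Lmap_apply]
  apply Finset.sum_congr rfl
  intro i _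
  have hle : i ≤ (⟨n-1, by omega⟩ : Fin n) := by simp [Fin.le_def]; omega
  rw [if_pos hle]
  have harg : (n-1) - (i:ℕ) + 1 = n - (i:ℕ) := by omega
  simp only [show ((⟨n-1, by omega⟩ : Fin n):ℕ) = n-1 from rfl, harg]

def Bset (n : ℕ) (hn : 3 ≤ n) : Set (Fin n → ℝ) :=
  {y | 0 < y ⟨0, by omega⟩ ∧ y ⟨0, by omega⟩ < y ⟨1, by omega⟩ ∧ NoPolygon n 3 y ∧
    y ⟨n-1, by omega⟩ < 1}

theorem Bset_props (n : ℕ) (hn : 3 ≤ n) (y : Fin n → ℝ) (hy : y ∈ Bset n hn) :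
    StrictMono y ∧ ∀ i, y i ∈ Set.Ioo (0:ℝ) 1 := by
  obtain ⟨h0, h01, hnp, hlast⟩ := hy
  rw [noPolygon_three_iff] at hnp
  have pos : ∀ m (hm : m < n), 0 < y ⟨m, hm⟩ := by
    intro m
    induction m using Nat.strong_induction_on with
    | _ m ih =>
      match m with
      | 0 => intro hm; exact h0
      | 1 => intro hm; exact lt_trans h0 h01
      | (m+2) =>
        intro hm
        have := hnp m hm
        have p1 := ih m (by omega) (by omega)
        have p2 := ih (m+1) (by omega) (by omega)
        linarith
  have hsm : StrictMono y := by
    apply strictMono_of_succ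
    intro m hm
    match m with
    | 0 => exact h01
    | (m+1) =>
      have := hnp m (by omega)
      have := pos m (by omega)
      linarith
  refine ⟨hsm, fun i => ⟨?_, ?_⟩⟩
  · have := pos i.1 i.2
    simpa using this
  · have hle : i ≤ (⟨n-1, by omega⟩ : Fin n) := by simp [Fin.le_def]; omega
    exact lt_of_le_of_lt (hsm.monotone hle) hlast

def Δc (n : ℕ) : Set (Fin n → ℝ) :=
  {u | (∀ i, 0 < u i) ∧ ∑ i : Fin n, (Nat.fib (n - (i:ℕ)) : ℝ) * u i < 1}

theorem Lmap_image (n : ℕ) (hn : 3 ≤ n) : Lmap n '' Δc n = Bset n hn := by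
  ext y
  constructor
  · rintro ⟨u, ⟨hu, hsum⟩, rfl⟩
    refine ⟨?_, ?_, ?_, ?_⟩
    · rw [Lmap_zero n u (by omega)]; exact hu _
    · rw [Lmap_zero n u (by omega), Lmap_one n u (by omega)]
      have := hu ⟨1, by omega⟩
      linarith
    · rw [noPolygon_three_iff]
      intro m hm
      rw [Lmap_rec n u m hm]
      have := hu ⟨m+2, hm⟩
      linarith
    · rw [Lmap_last n u (by omega)]
      exact hsum
  · intro hy
    obtain ⟨hsm, hio⟩ := Bset_props n hn y hy
    obtain ⟨h0, h01, hnp, hlast⟩ := hy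
    rw [noPolygon_three_iff] at hnp
    set u : Fin n → ℝ := fun i =>
      if h0 : (i:ℕ) = 0 then y i
      else if h1 : (i:ℕ) = 1 then y i - y ⟨0, by omega⟩
      else y i - y ⟨(i:ℕ)-1, by omega⟩ - y ⟨(i:ℕ)-2, by omega⟩ with hu
    have hu0 : ∀ h : (0:ℕ) < n, u ⟨0, h⟩ = y ⟨0, h⟩ := by
      intro h; simp [hu]
    have hu1 : ∀ h : (1:ℕ) < n, u ⟨1, h⟩ = y ⟨1, h⟩ - y ⟨0, by omega⟩ := by
      intro h; simp [hu]
    have hu2 : ∀ m (hm : m+2 < n),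
        u ⟨m+2, hm⟩ = y ⟨m+2, hm⟩ - y ⟨m+1, by omega⟩ - y ⟨m, by omega⟩ := by
      intro m hm
      show (if _ : ((⟨m+2, hm⟩ : Fin n):ℕ) = 0 then _ else _) = _
      rw [dif_neg (by simp), dif_neg (by simp)]
      rfl
    have hLy : ∀ m (hm : m < n), Lmap n u ⟨m, hm⟩ = y ⟨m, hm⟩ := by
      intro m
      induction m using Nat.strong_induction_on with
      | _ m ih =>
        match m with
        | 0 => intro hm; rw [Lmap_zero n u hm, hu0]
        | 1 => intro hm; rw [Lmap_one n u hm, hu0, hu1]; ring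
        | (m+2) =>
          intro hm
          rw [Lmap_rec n u m hm, ih m (by omega) (by omega), ih (m+1) (by omega) (by omega),
            hu2 m hm]
          ring
    have hLu : Lmap n u = y := by
      funext i
      have := hLy i.1 i.2
      simpa using this
    refine ⟨u, ⟨?_, ?_⟩, hLu⟩
    · rintro ⟨m, hm⟩
      match m with
      | 0 => rw [hu0]; exact h0
      | 1 => rw [hu1]; linarith
      | (m+2) =>
        rw [hu2 m hm]
        have := hnp m hm
        linarith
    · rw [← Lmap_last n u (by omega), hLu]
      exact hlast

theorem det_Lmap (n : ℕ) : LinearMap.det (Lmap n) = 1 := by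
  apply det_lower
  · intro i j hij
    simp [Lmap, Matrix.of_apply, not_le.mpr hij]
  · intro i; simp [Lmap, Matrix.of_apply]

noncomputable def Dmap (n : ℕ) : (Fin n → ℝ) →ₗ[ℝ] (Fin n → ℝ) :=
  Matrix.toLin' (Matrix.diagonal fun i : Fin n => (Nat.fib (n - (i:ℕ)) : ℝ))

theorem fibpos (n : ℕ) (i : Fin n) : 0 < Nat.fib (n - (i:ℕ)) :=
  Nat.fib_pos.mpr (by omega)

theorem Dmap_preimage (n : ℕ) : Δc n = Dmap n ⁻¹' Δ1 n := by
  ext u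
  have happ : ∀ i, Dmap n u i = (Nat.fib (n - (i:ℕ)) : ℝ) * u i := by
    intro i
    simp [Dmap, Matrix.toLin'_apply, Matrix.mulVec_diagonal]
  simp only [Δc, Δ1, Set.mem_setOf_eq, Set.mem_preimage, happ]
  constructor
  · rintro ⟨h1, h2⟩
    refine ⟨fun i => ?_, h2⟩
    have := fibpos n i
    have := h1 i
    positivity
  · rintro ⟨h1, h2⟩
    refine ⟨fun i => ?_, h2⟩
    have hf : (0:ℝ) < (Nat.fib (n - (i:ℕ)) : ℝ) := by exact_mod_cast fibpos n i
    nlinarith [h1 i]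

theorem det_Dmap (n : ℕ) :
    LinearMap.det (Dmap n) = ((∏ i : Fin n, Nat.fib (n - (i:ℕ)) : ℕ) : ℝ) := by
  rw [Dmap, LinearMap.det_toLin', Matrix.det_diagonal]
  push_cast
  rfl

theorem vol_Δc (n : ℕ) (hn : 0 < n) :
    volume (Δc n) = ((∏ i : Fin n, Nat.fib (n - (i:ℕ)) : ℕ) : ℝ≥0∞)⁻¹ * ((n.factorial : ℝ≥0∞))⁻¹ := by
  set N : ℕ := ∏ i : Fin n, Nat.fib (n - (i:ℕ)) with hN
  have hNpos : 0 < N := Finset.prod_pos fun i _ => fibpos n i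
  have hdet : LinearMap.det (Dmap n) = (N : ℝ) := det_Dmap n
  have hdet0 : LinearMap.det (Dmap n) ≠ 0 := by
    rw [hdet]; exact_mod_cast hNpos.ne'
  rw [Dmap_preimage n, Measure.addHaar_preimage_linearMap volume hdet0, vol_Δ1 n hn, hdet]
  congr 1
  rw [abs_of_pos (by positivity)]
  rw [ENNReal.ofReal_inv_of_pos (by exact_mod_cast hNpos)]
  congr 1
  exact ENNReal.ofReal_natCast N

theorem vol_Bset (n : ℕ) (hn : 3 ≤ n) :
    volume (Bset n hn) =
      ((∏ i : Fin n, Nat.fib (n - (i:ℕ)) : ℕ) : ℝ≥0∞)⁻¹ * ((n.factorial : ℝ≥0∞))⁻¹ := by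
  rw [← Lmap_image n hn, Measure.addHaar_image_linearMap, det_Lmap]
  simpa using vol_Δc n (by omega)

theorem measurable_Bset (n : ℕ) (hn : 3 ≤ n) : MeasurableSet (Bset n hn) := by
  have hNP : MeasurableSet {y : Fin n → ℝ | NoPolygon n 3 y} := by
    have h : {y : Fin n → ℝ | NoPolygon n 3 y} =
        ⋂ (m : ℕ), ⋂ (hm : m+2 < n),
          {y : Fin n → ℝ | y ⟨m, by omega⟩ + y ⟨m+1, by omega⟩ < y ⟨m+2, hm⟩} := by
      ext y
      simp only [Set.mem_setOf_eq, Set.mem_iInter, noPolygon_three_iff]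
    rw [h]
    refine MeasurableSet.iInter fun m => MeasurableSet.iInter fun hm => ?_
    have f1 : Measurable (fun y : Fin n → ℝ => y ⟨m, by omega⟩ + y ⟨m+1, by omega⟩) :=
      (measurable_pi_apply _).add (measurable_pi_apply _)
    exact measurableSet_lt f1 (measurable_pi_apply _)
  have h : Bset n hn = {y : Fin n → ℝ | 0 < y ⟨0, by omega⟩} ∩
      {y : Fin n → ℝ | y ⟨0, by omega⟩ < y ⟨1, by omega⟩} ∩
      {y : Fin n → ℝ | NoPolygon n 3 y} ∩ {y : Fin n → ℝ | y ⟨n-1, by omega⟩ < 1} := by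
    ext y
    simp only [Bset, Set.mem_setOf_eq, Set.mem_inter_iff]
    tauto
  rw [h]
  refine MeasurableSet.inter (MeasurableSet.inter (MeasurableSet.inter ?_ ?_) hNP) ?_
  · exact measurableSet_lt measurable_const (measurable_pi_apply _)
  · exact measurableSet_lt (measurable_pi_apply _) (measurable_pi_apply _)
  · exact measurableSet_lt (measurable_pi_apply _) measurable_const

theorem prod_fib_eq (n : ℕ) :
    ∏ i : Fin n, Nat.fib (n - (i:ℕ)) = ∏ i ∈ Finset.Icc 1 n, Nat.fib i := by
  rw [Fin.prod_univ_eq_prod_range (fun i => Nat.fib (n - i)) n]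
  rw [show ∏ i ∈ Finset.range n, Nat.fib (n - i) = ∏ i ∈ Finset.range n, Nat.fib (i+1) by
    rw [← Finset.prod_range_reflect]
    apply Finset.prod_congr rfl
    intro j hj
    rw [Finset.mem_range] at hj
    congr 1
    omega]
  rw [← Finset.Ico_add_one_right_eq_Icc, Finset.prod_Ico_eq_prod_range]
  apply Finset.prod_congr (by congr 1)
  intro j _
  congr 1
  omega

end PkSt

/-- **Triangle case.** For `n ≥ 3`, the probability that no triangle can be formed
from the `n` sticks, i.e. `X_(i) + X_(i+1) < X_(i+2)` for all `1 ≤ i ≤ n-2`,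
equals the inverse Fibonacci factorial `1 / ∏_{i=1}^n F_i`. -/
theorem pickup_sticks_no_triangle_prob (n : ℕ) (hn : 3 ≤ n) :
    volume {x : Fin n → ℝ | (∀ i, x i ∈ Set.Icc (0 : ℝ) 1) ∧
        NoPolygon n 3 (x ∘ Tuple.sort x)} =
      1 / ∏ i ∈ Finset.Icc 1 n, (Nat.fib i : ℝ≥0∞) := by
  classical
  set Tset := {x : Fin n → ℝ | (∀ i, x i ∈ Set.Icc (0 : ℝ) 1) ∧
    NoPolygon n 3 (x ∘ Tuple.sort x)} with hTset
  set U := ⋃ σ : Equiv.Perm (Fin n), {x : Fin n → ℝ | x ∘ σ ∈ PkSt.Bset n hn} with hUdef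
  set Nn := {x : Fin n → ℝ | ¬ Function.Injective x} ∪
    ((⋃ i : Fin n, {x : Fin n → ℝ | x i = 0}) ∪ ⋃ i : Fin n, {x : Fin n → ℝ | x i = 1})
    with hNn
  have hUT : U ⊆ Tset := by
    intro x hx
    obtain ⟨σ, hσ⟩ := Set.mem_iUnion.mp hx
    have hp := PkSt.Bset_props n hn _ hσ
    constructor
    · intro i
      have h2 := hp.2 (σ.symm i)
      simp only [Function.comp_apply, Equiv.apply_symm_apply] at h2
      exact ⟨h2.1.le, h2.2.le⟩
    · have he : x ∘ σ = x ∘ Tuple.sort x :=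
        Tuple.comp_sort_eq_comp_iff_monotone.mpr hp.1.monotone
      rw [← he]
      exact hσ.2.2.1
  have hTN : Tset ⊆ U ∪ Nn := by
    rintro x ⟨hbox, hnp⟩
    by_cases hinj : Function.Injective x
    · by_cases h0 : ∃ i, x i = 0
      · obtain ⟨i, hi⟩ := h0
        exact Set.mem_union_right _ (Set.mem_union_right _ (Set.mem_union_left _ (Set.mem_iUnion.mpr ⟨i, hi⟩)))
      · by_cases h1 : ∃ i, x i = 1
        · obtain ⟨i, hi⟩ := h1
          exact Set.mem_union_right _ (Set.mem_union_right _ (Set.mem_union_right _ (Set.mem_iUnion.mpr ⟨i, hi⟩)))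
        · push_neg at h0 h1
          have hio : ∀ i, x i ∈ Set.Ioo (0:ℝ) 1 := by
            intro i
            exact ⟨lt_of_le_of_ne (hbox i).1 (Ne.symm (h0 i)),
              lt_of_le_of_ne (hbox i).2 (h1 i)⟩
          refine Set.mem_union_left _ ?_
          have hmono : Monotone (x ∘ Tuple.sort x) := Tuple.monotone_sort x
          have hsm : StrictMono (x ∘ Tuple.sort x) :=
            hmono.strictMono_of_injective (hinj.comp (Tuple.sort x).injective)
          refine Set.mem_iUnion.mpr ⟨Tuple.sort x, ?_, ?_, hnp, ?_⟩
          · exact (hio _).1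
          · exact hsm (by simp [Fin.lt_def])
          · exact (hio _).2
    · exact Set.mem_union_right _ (Set.mem_union_left _ hinj)
  have hNnull : volume Nn = 0 := by
    rw [hNn]
    refine measure_union_null (PkSt.noninj_null n) (measure_union_null ?_ ?_)
    · exact measure_iUnion_null fun i => PkSt.coord_null n i 0
    · exact measure_iUnion_null fun i => PkSt.coord_null n i 1
  have hvolU : volume U = (n.factorial : ℝ≥0∞) * volume (PkSt.Bset n hn) :=
    PkSt.perm_union n (PkSt.Bset n hn) (PkSt.measurable_Bset n hn)
      (fun y hy => (PkSt.Bset_props n hn y hy).1)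
  have hTvol : volume Tset = volume U := by
    refine le_antisymm ?_ (measure_mono hUT)
    calc volume Tset ≤ volume (U ∪ Nn) := measure_mono hTN
      _ ≤ volume U + volume Nn := measure_union_le _ _
      _ = volume U := by rw [hNnull, add_zero]
  rw [hTvol, hvolU, PkSt.vol_Bset n hn, PkSt.prod_fib_eq]
  have hf0 : (n.factorial : ℝ≥0∞) ≠ 0 := by simp [Nat.factorial_ne_zero]
  have hft : (n.factorial : ℝ≥0∞) ≠ ⊤ := natCast_ne_top _
  rw [one_div, ← Nat.cast_prod]
  rw [mul_comm ((((∏ i ∈ Finset.Icc 1 n, Nat.fib i : ℕ)) : ℝ≥0∞))⁻¹ _, ← mul_assoc,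
    ENNReal.mul_inv_cancel hf0 hft, one_mul]
end
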